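/- arXiv:1811.09764 — 11 statements merged into one kernel-verified Lean document; each statement's English description precedes it below -/
import Mathlib

section
/- Let B be a real K×K matrix and let l, m ∈ {1,…,K} with l ≠ m. Then f_{ml}^T · adj(B(l|l)) · b_{·l} = (−1)^{m+l+1} · det(B(l|m)), where adj denotes the adjugate (classical adjoint) matrix. -/
open Matrix

lemma val_succAbove' {n : ℕ} (p : Fin (n + 1)) (i : Fin n) :
    ((p.succAbove i : Fin (n + 1)) : ℕ) = if (i : ℕ) < (p : ℕ) then (i : ℕ) else (i : ℕ) + 1 := by
  rw [Fin.succAbove]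
  split_ifs with h1 h2 h3
  · rfl
  · exact absurd h1 (by simpa [Fin.lt_def] using h2)
  · exact absurd (by simpa [Fin.lt_def] using h3) h1
  · rfl

lemma neg_one_pow_parity (a b : ℕ) (h : a % 2 = b % 2) : ((-1 : ℝ)) ^ a = (-1) ^ b := by
  rcases Nat.even_or_odd a with ha | ha
  · have hae := Nat.even_iff.mp ha
    rw [ha.neg_one_pow, (Nat.even_iff.mpr (by omega)).neg_one_pow]
  · have hao := Nat.odd_iff.mp ha
    rw [ha.neg_one_pow, (Nat.odd_iff.mpr (by omega)).neg_one_pow]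

/-- Lemma 2.1 (le:adj): For a real `(K+1)×(K+1)` matrix `B` and indices `l ≠ m`
(`m = l.succAbove i`), one has
`f_{ml}ᵀ ⬝ adj(B(l|l)) ⬝ b_{·l} = (−1)^{m+l+1} det(B(l|m))`,
where indices `m, l` in the sign are 1-based (so with 0-based indices the
exponent is `m + l + 1`). -/
theorem stmt_0 {K : ℕ} (B : Matrix (Fin (K + 1)) (Fin (K + 1)) ℝ)
    (l m : Fin (K + 1)) (i : Fin K) (him : l.succAbove i = m) :
    ((B.submatrix l.succAbove l.succAbove).adjugate *ᵥ (fun j => B (l.succAbove j) l)) i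
      = (-1 : ℝ) ^ ((m : ℕ) + (l : ℕ) + 1) * (B.submatrix l.succAbove m.succAbove).det := by
  cases K with
  | zero => exact i.elim0
  | succ n =>
    set A := B.submatrix l.succAbove l.succAbove with hA
    set b : Fin (n + 1) → ℝ := fun j => B (l.succAbove j) l with hb
    -- l is in the range of m.succAbove
    have hlm : l ≠ m := fun h => Fin.succAbove_ne l i (h ▸ him)
    obtain ⟨j0, hj0⟩ := Fin.exists_succAbove_eq hlm
    -- value facts
    have hmv : ((m : ℕ)) = if (i : ℕ) < (l : ℕ) then (i : ℕ) else (i : ℕ) + 1 := by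
      rw [← him, val_succAbove']
    have hlv : ((l : ℕ)) = if (j0 : ℕ) < (m : ℕ) then (j0 : ℕ) else (j0 : ℕ) + 1 := by
      rw [← hj0, val_succAbove']
    -- the composition identity for columns
    have hcols : ∀ t : Fin n, m.succAbove (j0.succAbove t) = l.succAbove (i.succAbove t) := by
      intro t
      apply Fin.ext
      rw [val_succAbove', val_succAbove', val_succAbove', val_succAbove']
      split_ifs at * <;> omega
    -- LHS as a determinant via Cramer's rule
    have hcr : (A.adjugate *ᵥ b) i = (A.updateCol i b).det := by
      rw [← Matrix.cramer_eq_adjugate_mulVec, Matrix.cramer_apply]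
    rw [hcr]
    -- expand LHS along column i
    rw [Matrix.det_succ_column (A.updateCol i b) i]
    -- expand RHS along column j0
    rw [Matrix.det_succ_column (B.submatrix l.succAbove m.succAbove) j0, Finset.mul_sum]
    apply Finset.sum_congr rfl
    intro r _
    have hminor : (A.updateCol i b).submatrix r.succAbove i.succAbove
        = (B.submatrix l.succAbove m.succAbove).submatrix r.succAbove j0.succAbove := by
      ext s t
      simp only [Matrix.submatrix_apply, Matrix.updateCol_apply,
        if_neg (Fin.succAbove_ne i t), hA]
      rw [hcols t]
    have hentry : (A.updateCol i b) r i = B (l.succAbove r) l := by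
      simp [hA, hb]
    have hentry2 : (B.submatrix l.succAbove m.succAbove) r j0 = B (l.succAbove r) l := by
      simp [hj0]
    rw [hminor, hentry, hentry2]
    have hpar : ((r : ℕ) + (i : ℕ)) % 2
        = (((m : ℕ) + (l : ℕ) + 1) + ((r : ℕ) + (j0 : ℕ))) % 2 := by
      split_ifs at hmv hlv <;> omega
    rw [neg_one_pow_parity _ _ hpar, pow_add]
    ring
end

section
/- Let B be a real K×K matrix with det(B) ≠ 0 and det(B(l|l)) ≠ 0 for every l (so in particular each denominator b_{ll} − b_{l·}(B(l|l))^{-1}b_{·l} = det(B)/det(B(l|l)) is nonzero). Then for every m ∈ {1,…,K}: [b_{m·}(B(m|m))^{-1}b_{·m}] / [b_{mm} − b_{m·}(B(m|m))^{-1}b_{·m}] = Σ_{l≠m} [b_{lm} · f_{ml}^T (B(l|l))^{-1} b_{·l}] / [b_{ll} − b_{l·}(B(l|l))^{-1} b_{·l}]. -/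
open Matrix

/-- Lemma 2.3, identity (13) (le:tozd, first part). Here `idx l m` is the position of
index `m` among the indices remaining after deleting index `l` (so `f_{ml}ᵀ v = v (idx l m)`),
characterized by `l.succAbove (idx l m) = m` for `m ≠ l`. -/
theorem stmt_2 {K : ℕ} (B : Matrix (Fin (K + 1)) (Fin (K + 1)) ℝ)
    (idx : Fin (K + 1) → Fin (K + 1) → Fin K)
    (hidx : ∀ l m : Fin (K + 1), m ≠ l → l.succAbove (idx l m) = m)
    (hdet : B.det ≠ 0)
    (hdiag : ∀ l : Fin (K + 1), (B.submatrix l.succAbove l.succAbove).det ≠ 0)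
    (m : Fin (K + 1)) :
    ((fun j => B m (m.succAbove j)) ⬝ᵥ
        ((B.submatrix m.succAbove m.succAbove)⁻¹ *ᵥ (fun j => B (m.succAbove j) m)))
      / (B m m - (fun j => B m (m.succAbove j)) ⬝ᵥ
          ((B.submatrix m.succAbove m.succAbove)⁻¹ *ᵥ (fun j => B (m.succAbove j) m)))
    = ∑ l ∈ Finset.univ.erase m,
        B l m * (((B.submatrix l.succAbove l.succAbove)⁻¹ *ᵥ (fun j => B (l.succAbove j) l))
            (idx l m))
          / (B l l - (fun j => B l (l.succAbove j)) ⬝ᵥ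
              ((B.submatrix l.succAbove l.succAbove)⁻¹ *ᵥ (fun j => B (l.succAbove j) l))) := by
  have hB : IsUnit B.det := hdet.isUnit
  have hmul : B * B⁻¹ = 1 := mul_nonsing_inv B hB
  have hmul' : B⁻¹ * B = 1 := nonsing_inv_mul B hB
  -- key facts for each l
  have key : ∀ l : Fin (K + 1),
      (∀ k, B⁻¹ (l.succAbove k) l =
        -(B⁻¹ l l) * ((B.submatrix l.succAbove l.succAbove)⁻¹ *ᵥ
          (fun j => B (l.succAbove j) l)) k) ∧
      B⁻¹ l l * (B l l - (fun j => B l (l.succAbove j)) ⬝ᵥ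
        ((B.submatrix l.succAbove l.succAbove)⁻¹ *ᵥ (fun j => B (l.succAbove j) l))) = 1 := by
    intro l
    set A := B.submatrix l.succAbove l.succAbove with hA
    have hAu : IsUnit A.det := (hdiag l).isUnit
    have hAinv : A⁻¹ * A = 1 := nonsing_inv_mul A hAu
    set w : Fin K → ℝ := fun k => B⁻¹ (l.succAbove k) l with hw
    set c : Fin K → ℝ := fun j => B (l.succAbove j) l with hc
    set β : ℝ := B⁻¹ l l with hβ
    have hrow : ∀ i, B i l * β + ∑ k, B i (l.succAbove k) * w k
        = if i = l then 1 else 0 := by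
      intro i
      have h1 := congrFun (congrFun hmul i) l
      rw [Matrix.mul_apply, Fin.sum_univ_succAbove (fun j => B i j * B⁻¹ j l) l] at h1
      simpa [Matrix.one_apply, hw, hβ] using h1
    have hAw : A *ᵥ w = (-β) • c := by
      funext k
      have h2 := hrow (l.succAbove k)
      rw [if_neg (Fin.succAbove_ne l k)] at h2
      simp only [Matrix.mulVec, dotProduct, hA, Matrix.submatrix_apply, Pi.smul_apply,
        smul_eq_mul, hc]
      linarith
    have hwv : ∀ k, w k = -β * (A⁻¹ *ᵥ c) k := by
      intro k
      have h3 : A⁻¹ *ᵥ (A *ᵥ w) = w := by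
        rw [Matrix.mulVec_mulVec, hAinv, Matrix.one_mulVec]
      rw [hAw, Matrix.mulVec_smul] at h3
      have := congrFun h3 k
      simpa [smul_eq_mul] using this.symm
    refine ⟨hwv, ?_⟩
    have h4 := hrow l
    rw [if_pos rfl] at h4
    have h5 : ∑ k, B l (l.succAbove k) * w k
        = -β * ((fun j => B l (l.succAbove j)) ⬝ᵥ (A⁻¹ *ᵥ c)) := by
      simp only [dotProduct, Finset.mul_sum]
      exact Finset.sum_congr rfl fun k _ => by rw [hwv k]; ring
    rw [h5] at h4
    ring_nf
    ring_nf at h4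
    linarith
  obtain ⟨hkey1, hkey2⟩ := key m
  set v := (B.submatrix m.succAbove m.succAbove)⁻¹ *ᵥ (fun j => B (m.succAbove j) m) with hv
  set s : ℝ := (fun j => B m (m.succAbove j)) ⬝ᵥ v with hs
  set β : ℝ := B⁻¹ m m with hβ
  have hdne : B m m - s ≠ 0 := by
    intro h
    rw [h, mul_zero] at hkey2
    exact one_ne_zero hkey2.symm
  -- RHS terms
  have hterm : ∀ l ∈ Finset.univ.erase m,
      B l m * (((B.submatrix l.succAbove l.succAbove)⁻¹ *ᵥ (fun j => B (l.succAbove j) l))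
            (idx l m))
          / (B l l - (fun j => B l (l.succAbove j)) ⬝ᵥ
              ((B.submatrix l.succAbove l.succAbove)⁻¹ *ᵥ (fun j => B (l.succAbove j) l)))
      = -(B⁻¹ m l * B l m) := by
    intro l hl
    obtain ⟨hk1, hk2⟩ := key l
    set vl := (B.submatrix l.succAbove l.succAbove)⁻¹ *ᵥ (fun j => B (l.succAbove j) l)
    set dl : ℝ := B l l - (fun j => B l (l.succAbove j)) ⬝ᵥ vl with hdl
    have hdl0 : dl ≠ 0 := by
      intro h
      rw [h, mul_zero] at hk2
      exact one_ne_zero hk2.symm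
    have hml : m ≠ l := (Finset.ne_of_mem_erase hl).symm
    have hk1' := hk1 (idx l m)
    rw [hidx l m hml] at hk1'
    -- B⁻¹ m l = -(B⁻¹ l l) * vl (idx l m)
    rw [div_eq_iff hdl0]
    have : B⁻¹ l l * dl = 1 := hk2
    calc B l m * vl (idx l m) = B l m * vl (idx l m) * (B⁻¹ l l * dl) := by rw [this]; ring
      _ = -(B⁻¹ m l * B l m) * dl := by rw [hk1']; ring
  rw [Finset.sum_congr rfl hterm]
  have hsum : ∑ l ∈ Finset.univ.erase m, -(B⁻¹ m l * B l m)
      = -(1 - B⁻¹ m m * B m m) := by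
    have h6 : ∑ l, B⁻¹ m l * B l m = 1 := by
      have := congrFun (congrFun hmul' m) m
      rw [Matrix.mul_apply] at this
      simpa [Matrix.one_apply] using this
    rw [Finset.sum_neg_distrib, ← h6,
      ← Finset.add_sum_erase _ (fun l => B⁻¹ m l * B l m) (Finset.mem_univ m)]
    ring
  rw [hsum]
  -- LHS: s / (B m m - s) = B m m * β - 1
  have : s / (B m m - s) = s * β := by
    rw [div_eq_iff hdne]
    calc s = s * (β * (B m m - s)) := by rw [hkey2]; ring
      _ = s * β * (B m m - s) := by ring
  rw [this]
  have h7 : β * (B m m - s) = 1 := hkey2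
  have hβs : s * β = B m m * β - 1 := by nlinarith [h7]
  rw [hβs]; ring
end

section
/- Let B be a real K×K matrix with det(B) ≠ 0 and det(B(l|l)) ≠ 0 for every l, and let l ≠ m be indices in {1,…,K}. Then −[b_{mm} · f_{lm}^T (B(m|m))^{-1} b_{·m}] / [b_{mm} − b_{m·}(B(m|m))^{-1}b_{·m}] = −b_{lm}/[b_{ll} − b_{l·}(B(l|l))^{-1}b_{·l}] + Σ_{k≠l, k≠m} [b_{km} · f_{lk}^T (B(k|k))^{-1} b_{·k}] / [b_{kk} − b_{k·}(B(k|k))^{-1}b_{·k}]. -/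
/-!
Write `s_k = b_{kk} - b_{k·} B(k|k)⁻¹ b_{·k}` for the Schur complement of `B(k|k)` in `B`. The
vector with `1` in position `k` and `-B(k|k)⁻¹ b_{·k}` elsewhere is mapped by `B` to `s_k e_k`,
so it equals `s_k` times the `k`-th column of `B⁻¹`. Hence `s_k (B⁻¹)_{kk} = 1` and
`f_{lk}ᵀ B(k|k)⁻¹ b_{·k} = -s_k (B⁻¹)_{lk}`, which turns every term of the identity into an entry
of `B⁻¹`; the identity becomes `(B⁻¹ B)_{lm} = 0`.
-/

open Matrix

namespace Matrix

variable {R : Type*} [CommRing R] {n : ℕ} (B : Matrix (Fin (n + 1)) (Fin (n + 1)) R)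
  (k : Fin (n + 1))

noncomputable def deletedColSolution : Fin n → R :=
  (B.submatrix k.succAbove k.succAbove)⁻¹ *ᵥ fun j => B (k.succAbove j) k

noncomputable def schurComplement : R :=
  B k k - (fun j => B k (k.succAbove j)) ⬝ᵥ B.deletedColSolution k

variable {B k}

theorem mulVec_insertNth_neg_deletedColSolution
    (hk : IsUnit (B.submatrix k.succAbove k.succAbove).det) :
    B *ᵥ k.insertNth 1 (-B.deletedColSolution k) = Pi.single k (B.schurComplement k) := by
  have hsolve : (B.submatrix k.succAbove k.succAbove) *ᵥ B.deletedColSolution k =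
      fun j => B (k.succAbove j) k := by
    rw [deletedColSolution, mulVec_mulVec, mul_nonsing_inv _ hk, one_mulVec]
  funext i
  rw [mulVec, dotProduct, Fin.sum_univ_succAbove _ k]
  simp only [Fin.insertNth_apply_same, Fin.insertNth_apply_succAbove, Pi.neg_apply, mul_neg,
    Finset.sum_neg_distrib, mul_one]
  rcases eq_or_ne i k with rfl | hik
  · rw [Pi.single_eq_same, schurComplement, dotProduct, sub_eq_add_neg]
  · obtain ⟨i', rfl⟩ := Fin.exists_succAbove_eq hik
    have := congrFun hsolve i'
    simp only [mulVec, dotProduct, submatrix_apply] at this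
    rw [Pi.single_eq_of_ne hik, this, add_neg_cancel]

theorem insertNth_neg_deletedColSolution_eq (hB : IsUnit B.det)
    (hk : IsUnit (B.submatrix k.succAbove k.succAbove).det) (i : Fin (n + 1)) :
    (k.insertNth 1 (-B.deletedColSolution k) : Fin (n + 1) → R) i =
      B.schurComplement k * B⁻¹ i k := by
  have h := congrArg (B⁻¹ *ᵥ ·) (mulVec_insertNth_neg_deletedColSolution hk)
  simp only [mulVec_mulVec, nonsing_inv_mul _ hB, one_mulVec, mulVec_single] at h
  rw [h, mul_comm]
  rfl

theorem schurComplement_mul_inv_apply_self (hB : IsUnit B.det)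
    (hk : IsUnit (B.submatrix k.succAbove k.succAbove).det) :
    B.schurComplement k * B⁻¹ k k = 1 := by
  rw [← insertNth_neg_deletedColSolution_eq hB hk, Fin.insertNth_apply_same]

theorem deletedColSolution_apply (hB : IsUnit B.det)
    (hk : IsUnit (B.submatrix k.succAbove k.succAbove).det) (i : Fin n) :
    B.deletedColSolution k i = -(B.schurComplement k * B⁻¹ (k.succAbove i) k) := by
  rw [← insertNth_neg_deletedColSolution_eq hB hk, Fin.insertNth_apply_succAbove, Pi.neg_apply,
    neg_neg]

end Matrix

/-- `idx p q` encodes `f_{qp}`: `f_{qp}ᵀ v = v (idx p q)`. -/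
theorem stmt_3 {K : ℕ} (B : Matrix (Fin (K + 1)) (Fin (K + 1)) ℝ)
    (idx : Fin (K + 1) → Fin (K + 1) → Fin K)
    (hidx : ∀ p q : Fin (K + 1), q ≠ p → p.succAbove (idx p q) = q)
    (hdet : B.det ≠ 0)
    (hdiag : ∀ l : Fin (K + 1), (B.submatrix l.succAbove l.succAbove).det ≠ 0)
    (l m : Fin (K + 1)) (hlm : l ≠ m) :
    -(B m m * (((B.submatrix m.succAbove m.succAbove)⁻¹ *ᵥ (fun j => B (m.succAbove j) m))
          (idx m l))
        / (B m m - (fun j => B m (m.succAbove j)) ⬝ᵥ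
            ((B.submatrix m.succAbove m.succAbove)⁻¹ *ᵥ (fun j => B (m.succAbove j) m))))
    = -(B l m / (B l l - (fun j => B l (l.succAbove j)) ⬝ᵥ
          ((B.submatrix l.succAbove l.succAbove)⁻¹ *ᵥ (fun j => B (l.succAbove j) l))))
      + ∑ k ∈ (Finset.univ.erase l).erase m,
          B k m * (((B.submatrix k.succAbove k.succAbove)⁻¹ *ᵥ (fun j => B (k.succAbove j) k))
              (idx k l))
            / (B k k - (fun j => B k (k.succAbove j)) ⬝ᵥ
                ((B.submatrix k.succAbove k.succAbove)⁻¹ *ᵥ (fun j => B (k.succAbove j) k))) := by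
  change -(B m m * B.deletedColSolution m (idx m l) / B.schurComplement m)
    = -(B l m / B.schurComplement l) + ∑ k ∈ (Finset.univ.erase l).erase m,
        B k m * B.deletedColSolution k (idx k l) / B.schurComplement k
  have hB := hdet.isUnit
  have hs : ∀ k, B.schurComplement k ≠ 0 := fun k =>
    left_ne_zero_of_mul_eq_one (schurComplement_mul_inv_apply_self hB (hdiag k).isUnit)
  have hterm : ∀ k ≠ l, B k m * B.deletedColSolution k (idx k l) / B.schurComplement k
      = -(B⁻¹ l k * B k m) := fun k hkl => by
    rw [deletedColSolution_apply hB (hdiag k).isUnit, hidx k l hkl.symm]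
    field_simp [hs k]
  have hl : B l m / B.schurComplement l = B⁻¹ l l * B l m := by
    rw [div_eq_iff (hs l), mul_right_comm, mul_comm (B⁻¹ l l),
      schurComplement_mul_inv_apply_self hB (hdiag l).isUnit, one_mul]
  have hzero : ∑ k, B⁻¹ l k * B k m = 0 := by
    rw [← mul_apply, nonsing_inv_mul _ hB, one_apply_ne hlm]
  rw [← Finset.add_sum_erase _ _ (Finset.mem_univ l),
    ← Finset.add_sum_erase _ _ (Finset.mem_erase.mpr ⟨hlm.symm, Finset.mem_univ m⟩)] at hzero
  rw [hterm m hlm.symm, hl, Finset.sum_congr rfl fun k hk => hterm k (Finset.ne_of_mem_erase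
    (Finset.mem_of_mem_erase hk)), Finset.sum_neg_distrib]
  linear_combination hzero
end

section
/- For each m define c_{mk} = a_{mk} / (1 − Σ_{l=1}^K a_{ml} p_{ml}) for k = 1,…,K. Then the K×K matrix C = (c_{mk}) equals (I − P^T)^{-1}. In particular 1 − Σ_{l=1}^K a_{ml} p_{ml} = 1/c_{mm} and a_{mk} = c_{mk}/c_{mm}. -/
open Matrix

/-!
Since `1` is not an eigenvalue of `P`, the matrix `I - P` is invertible. If a principal submatrix
`(I - P)(m|m)` were singular, take a kernel vector and extend it by `0` at `m`: its coordinates of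
maximal modulus form a set of states that `P` never leaves and on which `P` is stochastic, so
`I - P` is block triangular with a singular diagonal block, contradicting `det (I - P) ≠ 0`.
With both inverses available, the equations defining `a_{m·}` say exactly that
`(I - P) a_{m·} = d_m e_m` with `d_m = 1 - Σ_l a_{ml} p_{ml}`; hence
`a_{mk} = d_m ((I - P)⁻¹)_{km}`, the case `k = m` gives `d_m ≠ 0`, and
`c_{mk} = ((I - P)⁻¹)_{km} = ((I - Pᵀ)⁻¹)_{mk}`.
-/

lemma Matrix.submatrix_one_sub {R m n : Type*} [Ring R] [DecidableEq m] [DecidableEq n]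
    (P : Matrix n n R) {e : m → n} (he : Function.Injective e) :
    (1 - P).submatrix e e = 1 - P.submatrix e e := by
  rw [← submatrix_one e he]; rfl

lemma isUnit_det_one_sub_of_one_notMem_spectrum {n : Type*} [Fintype n] [DecidableEq n]
    (P : Matrix n n ℝ) (h : (1 : ℂ) ∉ spectrum ℂ (P.map Complex.ofReal)) :
    IsUnit (1 - P).det := by
  have hmap : Complex.ofRealHom.mapMatrix (1 - P) = 1 - P.map Complex.ofReal := by
    rw [map_sub, map_one]; rfl
  rw [spectrum.notMem_iff, map_one, ← hmap, isUnit_iff_isUnit_det, ← RingHom.map_det,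
    isUnit_map_iff] at h
  exact h

lemma det_one_sub_eq_zero_of_closed_stochastic_set {R n : Type*} [CommRing R] [IsDomain R]
    [Fintype n] [DecidableEq n] (P : Matrix n n R) {s : Finset n} (hs : s.Nonempty)
    (hclosed : ∀ i ∈ s, ∀ j ∉ s, P i j = 0) (hrow : ∀ i ∈ s, ∑ j, P i j = 1) :
    (1 - P).det = 0 := by
  have hblock : ((1 - P).toSquareBlockProp (· ∈ s)).det = 0 := by
    refine exists_mulVec_eq_zero_iff.mp ⟨fun _ => 1, ?_, ?_⟩
    · obtain ⟨i, hi⟩ := hs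
      exact Function.ne_iff.mpr ⟨⟨i, hi⟩, one_ne_zero⟩
    · ext ⟨i, hi⟩
      have hrow_s : ∑ j ∈ s, P i j = 1 := by
        rw [← hrow i hi, ← Finset.sum_subset (Finset.subset_univ s)]
        exact fun j _ hj => hclosed i hi j hj
      calc ∑ j : s, (1 - P) i j * 1 = ∑ j ∈ s, (1 - P) i j := by
            simpa using Finset.sum_coe_sort s ((1 - P) i)
        _ = 0 := by
          simp only [Matrix.sub_apply]
          rw [Finset.sum_sub_distrib, hrow_s, Finset.sum_eq_single_of_mem i hi, one_apply_eq,
            sub_self]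
          exact fun j _ hji => one_apply_ne hji.symm
  rw [twoBlockTriangular_det' _ (· ∈ s) fun i hi j hj => ?_]
  · convert zero_mul _
    convert hblock
  rw [Matrix.sub_apply, one_apply_ne (ne_of_mem_of_not_mem hi hj), hclosed i hi j hj, sub_zero]

lemma sum_eq_one_and_eq_zero_of_le_abs_sum {n : Type*} [Fintype n] {w y : n → ℝ} {M : ℝ}
    (hw : ∀ j, 0 ≤ w j) (hw1 : ∑ j, w j ≤ 1) (hy : ∀ j, |y j| ≤ M) (hM : 0 < M)
    (hle : M ≤ |∑ j, w j * y j|) :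
    ∑ j, w j = 1 ∧ ∀ j, |y j| < M → w j = 0 := by
  have habs : M ≤ ∑ j, w j * |y j| :=
    hle.trans <| (Finset.abs_sum_le_sum_abs _ _).trans_eq <|
      Finset.sum_congr rfl fun j _ => by rw [abs_mul, abs_of_nonneg (hw j)]
  have hgap : ∑ j, w j * (M - |y j|) = (∑ j, w j) * M - ∑ j, w j * |y j| := by
    rw [Finset.sum_mul, ← Finset.sum_sub_distrib]
    exact Finset.sum_congr rfl fun j _ => by ring
  have hgap_nonneg : ∀ j ∈ Finset.univ, 0 ≤ w j * (M - |y j|) :=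
    fun j _ => mul_nonneg (hw j) (sub_nonneg.mpr (hy j))
  have hgap_sum_nonneg := Finset.sum_nonneg hgap_nonneg
  have hsum : ∑ j, w j = 1 := le_antisymm hw1 (by nlinarith)
  have hgap_zero : ∑ j, w j * (M - |y j|) = 0 := by nlinarith
  refine ⟨hsum, fun j hj => ?_⟩
  have := (Finset.sum_eq_zero_iff_of_nonneg hgap_nonneg).mp hgap_zero j (Finset.mem_univ j)
  exact (mul_eq_zero.mp this).resolve_right (sub_ne_zero.mpr hj.ne')

lemma det_one_sub_eq_zero_of_mulVec_eq_on_support {n : Type*} [Fintype n] [DecidableEq n]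
    (P : Matrix n n ℝ) (hP : ∀ i j, 0 ≤ P i j) (hProw : ∀ i, ∑ j, P i j ≤ 1)
    {y : n → ℝ} (hy : y ≠ 0) (hfix : ∀ i, y i ≠ 0 → (P *ᵥ y) i = y i) :
    (1 - P).det = 0 := by
  obtain ⟨i₁, hi₁⟩ := Function.ne_iff.mp hy
  have : Nonempty n := ⟨i₁⟩
  obtain ⟨i₀, hmax⟩ := Finite.exists_max fun i => |y i|
  set M := |y i₀|
  have hM : 0 < M := (abs_pos.mpr hi₁).trans_le (hmax i₁)
  have hrow_max : ∀ i, |y i| = M → ∑ j, P i j = 1 ∧ ∀ j, |y j| < M → P i j = 0 := fun i hi =>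
    sum_eq_one_and_eq_zero_of_le_abs_sum (hP i) (hProw i) hmax hM <| by
      rw [← hi, ← hfix i (abs_pos.mp (hi ▸ hM))]; rfl
  refine det_one_sub_eq_zero_of_closed_stochastic_set P (s := {i | |y i| = M}) ⟨i₀, by simp [M]⟩
    (fun i hi j hj => ?_) (fun i hi => (hrow_max i (by simpa using hi)).1)
  simp only [Finset.mem_filter, Finset.mem_univ, true_and] at hi hj
  exact (hrow_max i hi).2 j ((hmax j).lt_of_ne hj)

lemma isUnit_det_one_sub_submatrix_succAbove {n : ℕ} (P : Matrix (Fin (n + 1)) (Fin (n + 1)) ℝ)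
    (hP : ∀ i j, 0 ≤ P i j) (hProw : ∀ i, ∑ j, P i j ≤ 1) (hdet : IsUnit (1 - P).det)
    (m : Fin (n + 1)) : IsUnit ((1 - P).submatrix m.succAbove m.succAbove).det := by
  rw [isUnit_iff_ne_zero] at hdet ⊢
  intro hsub
  obtain ⟨x, hx, hker⟩ := exists_mulVec_eq_zero_iff.mpr hsub
  rw [submatrix_one_sub P Fin.succAbove_right_injective, sub_mulVec, one_mulVec,
    sub_eq_zero] at hker
  refine hdet (det_one_sub_eq_zero_of_mulVec_eq_on_support P hP hProw
    (y := m.insertNth 0 x) ?_ fun i hi => ?_)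
  · obtain ⟨j, hj⟩ := Function.ne_iff.mp hx
    exact Function.ne_iff.mpr ⟨m.succAbove j, by simpa using hj⟩
  · obtain ⟨j, rfl⟩ := Fin.exists_succAbove_eq (x := i) (y := m) (by rintro rfl; simp at hi)
    rw [Fin.insertNth_apply_succAbove, congrFun hker j, mulVec, dotProduct,
      Fin.sum_univ_succAbove _ m]
    simp [mulVec, dotProduct]

lemma one_sub_mulVec_eq_single {R : Type*} [CommRing R] {n : ℕ}
    (P : Matrix (Fin (n + 1)) (Fin (n + 1)) R) (m : Fin (n + 1))
    (hsub : IsUnit ((1 - P).submatrix m.succAbove m.succAbove).det)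
    {v : Fin (n + 1) → R} (hvm : v m = 1)
    (hv : ∀ i, v (m.succAbove i)
      = (((1 - P).submatrix m.succAbove m.succAbove)⁻¹ *ᵥ fun j => P (m.succAbove j) m) i) :
    (1 - P) *ᵥ v = Pi.single m (1 - ∑ l, v l * P m l) := by
  have hker : (1 - P.submatrix m.succAbove m.succAbove) *ᵥ (v ∘ m.succAbove)
      = fun j => P (m.succAbove j) m := by
    rw [← submatrix_one_sub P Fin.succAbove_right_injective,
      show v ∘ m.succAbove = _ from funext hv, mulVec_mulVec, mul_nonsing_inv _ hsub, one_mulVec]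
  rw [sub_mulVec, one_mulVec]
  ext k
  rcases Fin.eq_self_or_eq_succAbove m k with rfl | ⟨i, rfl⟩
  · simp only [Pi.sub_apply, Pi.single_eq_same, hvm, mulVec, dotProduct, mul_comm]
  · have hrow : v (m.succAbove i) - ∑ j, P (m.succAbove i) (m.succAbove j) * v (m.succAbove j)
        = P (m.succAbove i) m := by
      rw [← congrFun hker i, sub_mulVec, one_mulVec]; rfl
    rw [Pi.sub_apply, mulVec, dotProduct, Fin.sum_univ_succAbove _ m, hvm,
      Pi.single_eq_of_ne (Fin.succAbove_ne m i)]
    linear_combination hrow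

/-- Equation (26) in the proof of Theorem 2.1: the matrix `C = (c_{mk})` with
`c_{mk} = a_{mk} / (1 − Σ_l a_{ml} p_{ml})` equals `(I − Pᵀ)⁻¹`; in particular
`1 − Σ_l a_{ml} p_{ml} = 1 / c_{mm}` and `a_{mk} = c_{mk} / c_{mm}`.
Here `a m m = 1` and, for `l ≠ m`, the numbers `a m l` are given by
`(a_{ml})_{l≠m} = ((I−P)(m|m))⁻¹ p_{·m}`. -/
theorem stmt_4 {K : ℕ} (P : Matrix (Fin (K + 1)) (Fin (K + 1)) ℝ)
    (hP : ∀ k l, 0 ≤ P k l) (hProw : ∀ k, ∑ l, P k l ≤ 1)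
    (hspec : ∀ z ∈ spectrum ℂ (P.map Complex.ofReal), ‖z‖ < 1)
    (a : Fin (K + 1) → Fin (K + 1) → ℝ)
    (ha_diag : ∀ m, a m m = 1)
    (ha : ∀ (m : Fin (K + 1)) (i : Fin K),
      a m (m.succAbove i)
        = ((((1 : Matrix (Fin (K + 1)) (Fin (K + 1)) ℝ) - P).submatrix m.succAbove m.succAbove)⁻¹
            *ᵥ (fun j => P (m.succAbove j) m)) i)
    (c : Fin (K + 1) → Fin (K + 1) → ℝ)
    (hc : ∀ m k, c m k = a m k / (1 - ∑ l, a m l * P m l)) :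
    Matrix.of c = ((1 : Matrix (Fin (K + 1)) (Fin (K + 1)) ℝ) - Pᵀ)⁻¹
      ∧ (∀ m, 1 - ∑ l, a m l * P m l = 1 / c m m)
      ∧ (∀ m k, a m k = c m k / c m m) := by
  have hdet := isUnit_det_one_sub_of_one_notMem_spectrum P fun h => by simpa using hspec 1 h
  have hcol : ∀ m k, a m k = (1 - P)⁻¹ k m * (1 - ∑ l, a m l * P m l) := fun m k => by
    have hsingle := one_sub_mulVec_eq_single P m
      (isUnit_det_one_sub_submatrix_succAbove P hP hProw hdet m) (ha_diag m) (ha m)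
    have := congrFun (congrArg ((1 - P)⁻¹ *ᵥ ·) hsingle) k
    simpa [mulVec_mulVec, nonsing_inv_mul _ hdet, mulVec_single] using this
  have hd : ∀ m, 1 - ∑ l, a m l * P m l ≠ 0 := fun m h => by
    simpa [h, ha_diag] using hcol m m
  have hc_inv : ∀ m k, c m k = (1 - P)⁻¹ k m := fun m k => by
    rw [hc, hcol m k, mul_div_cancel_right₀ _ (hd m)]
  refine ⟨?_, fun m => ?_, fun m k => ?_⟩
  · rw [← transpose_one, ← transpose_sub, ← transpose_nonsing_inv]
    ext m k
    rw [of_apply, hc_inv, transpose_apply]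
  · rw [hc, ha_diag, one_div_one_div]
  · rw [hc, hc, ha_diag]
    field_simp [hd m]
end

section
/- For every m ∈ {1,…,K}: (1 − Σ_{l=1}^K a_{ml} p_{ml}) · ν_m = Σ_{l=1}^K a_{ml} λ_l. Equivalently, defining θ^{(m)}_m by e^{θ^{(m)}_m} = (1 − Σ_{l=1}^K a_{ml} p_{ml}) μ_m / (Σ_{l=1}^K a_{ml} λ_l), one has e^{−θ^{(m)}_m} = ρ_m = ν_m/μ_m. -/
/-!
Write `Q = I − P`. The definition of `ν` says `νᵀ Q = λᵀ`, and the definition of `a_m` says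
that `Q a_m` vanishes off coordinate `m`, where it equals `1 − Σ_l a_{ml} p_{ml}`; hence
`Σ_l a_{ml} λ_l = νᵀ Q a_m = ν_m (1 − Σ_l a_{ml} p_{ml})`. The one non-formal input is the
invertibility of `Q(m|m)`: the positive vector `y = ν` restricted to the indices `≠ m` satisfies
`yᵀ P(m|m) < yᵀ` entrywise, so `diag(y) Q(m|m)` is strictly column diagonally dominant.
-/

open Matrix

theorem Matrix.det_one_sub_ne_zero_of_vecMul_lt {n : Type*} [Fintype n] [DecidableEq n]
    (P : Matrix n n ℝ) (hP : ∀ i j, 0 ≤ P i j) {y : n → ℝ} (hy : ∀ i, 0 < y i)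
    (hlt : ∀ j, (y ᵥ* P) j < y j) : (1 - P).det ≠ 0 := by
  suffices (diagonal y * (1 - P)).det ≠ 0 by
    rw [det_mul] at this
    exact right_ne_zero_of_mul this
  refine det_ne_zero_of_sum_col_lt_diag fun k => ?_
  have hoff : ∀ i ∈ Finset.univ.erase k, ‖(diagonal y * (1 - P)) i k‖ = y i * P i k := by
    intro i hi
    rw [diagonal_mul, sub_apply, one_apply_ne (Finset.ne_of_mem_erase hi), zero_sub, mul_neg,
      norm_neg, Real.norm_of_nonneg (mul_nonneg (hy i).le (hP i k))]
  have hcol : ∑ i ∈ Finset.univ.erase k, y i * P i k = (y ᵥ* P) k - y k * P k k := by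
    rw [vecMul, dotProduct, ← Finset.add_sum_erase _ _ (Finset.mem_univ k)]
    ring
  calc ∑ i ∈ Finset.univ.erase k, ‖(diagonal y * (1 - P)) i k‖
      = (y ᵥ* P) k - y k * P k k := by rw [Finset.sum_congr rfl hoff, hcol]
    _ < y k * (1 - P k k) := by linarith [hlt k]
    _ ≤ ‖(diagonal y * (1 - P)) k k‖ := by
      rw [diagonal_mul, sub_apply, one_apply_eq]; exact Real.le_norm_self _

theorem Matrix.det_one_sub_submatrix_succAbove_ne_zero {n : ℕ}
    (P : Matrix (Fin (n + 1)) (Fin (n + 1)) ℝ) (hP : ∀ i j, 0 ≤ P i j)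
    {ν lam : Fin (n + 1) → ℝ} (hν : ∀ k, 0 < ν k) (hlam : ∀ k, 0 < lam k)
    (hflow : ν ᵥ* (1 - P) = lam) (m : Fin (n + 1)) :
    ((1 - P).submatrix m.succAbove m.succAbove).det ≠ 0 := by
  have hsub : (1 - P).submatrix m.succAbove m.succAbove
      = 1 - P.submatrix m.succAbove m.succAbove := by
    rw [← submatrix_one m.succAbove Fin.succAbove_right_injective]
    rfl
  rw [hsub]
  refine det_one_sub_ne_zero_of_vecMul_lt _ (fun _ _ => hP _ _) (y := ν ∘ m.succAbove)
    (fun _ => hν _) fun j => ?_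
  have hj := congrFun hflow (m.succAbove j)
  rw [vecMul_sub, vecMul_one, Pi.sub_apply, vecMul, dotProduct,
    Fin.sum_univ_succAbove _ m] at hj
  have := mul_nonneg (hν m).le (hP m (m.succAbove j))
  have := hlam (m.succAbove j)
  simp only [vecMul, dotProduct, submatrix_apply, Function.comp_apply]
  linarith

theorem Matrix.mulVec_eq_single_of_submatrix_mulVec {R : Type*} [CommRing R] {n : ℕ}
    (Q : Matrix (Fin (n + 1)) (Fin (n + 1)) R) (m : Fin (n + 1)) {x : Fin (n + 1) → R}
    (hx : Q.submatrix m.succAbove m.succAbove *ᵥ (x ∘ m.succAbove)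
      = fun i => -(Q (m.succAbove i) m * x m)) :
    Q *ᵥ x = Pi.single m ((Q *ᵥ x) m) := by
  ext k
  rcases eq_or_ne k m with rfl | hk
  · simp
  obtain ⟨i, rfl⟩ := Fin.exists_succAbove_eq hk
  rw [Pi.single_eq_of_ne hk, mulVec, dotProduct, Fin.sum_univ_succAbove _ m]
  have := congrFun hx i
  simp only [mulVec, dotProduct, submatrix_apply, Function.comp_apply] at this
  rw [this]
  ring

theorem Real.exp_neg_eq_div_of_exp_eq {θ c μ ν T : ℝ} (hT : c * ν = T)
    (hθ : Real.exp θ = c * μ / T) : Real.exp (-θ) = ν / μ := by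
  have hc : c ≠ 0 := by
    rintro rfl
    simp [← hT] at hθ
  rw [Real.exp_neg, hθ, inv_div, ← hT, mul_div_mul_left _ _ hc]

theorem stmt_5_general {K : ℕ} (P : Matrix (Fin (K + 1)) (Fin (K + 1)) ℝ)
    (hP : ∀ k l, 0 ≤ P k l)
    (lam mu : Fin (K + 1) → ℝ) (hlam : ∀ k, 0 < lam k)
    (ν : Fin (K + 1) → ℝ)
    (hν : ν = ((1 : Matrix (Fin (K + 1)) (Fin (K + 1)) ℝ) - Pᵀ)⁻¹ *ᵥ lam)
    (hνpos : ∀ k, 0 < ν k)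
    (a : Fin (K + 1) → Fin (K + 1) → ℝ)
    (ha_diag : ∀ m, a m m = 1)
    (ha : ∀ (m : Fin (K + 1)) (i : Fin K),
      a m (m.succAbove i)
        = ((((1 : Matrix (Fin (K + 1)) (Fin (K + 1)) ℝ) - P).submatrix m.succAbove m.succAbove)⁻¹
            *ᵥ (fun j => P (m.succAbove j) m)) i)
    (m : Fin (K + 1)) :
    (1 - ∑ l, a m l * P m l) * ν m = ∑ l, a m l * lam l
      ∧ ∀ θm : ℝ,
          Real.exp θm = (1 - ∑ l, a m l * P m l) * mu m / (∑ l, a m l * lam l) →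
          Real.exp (-θm) = ν m / mu m := by
  have hdet : IsUnit (1 - Pᵀ).det := by
    by_contra h
    rw [nonsing_inv_apply_not_isUnit _ h, zero_mulVec] at hν
    exact (hνpos m).ne' (by simp [hν])
  have hflow : ν ᵥ* (1 - P) = lam := by
    rw [← mulVec_transpose, transpose_sub, transpose_one, hν, mulVec_mulVec,
      mul_nonsing_inv _ hdet, one_mulVec]
  set B := (1 - P).submatrix m.succAbove m.succAbove
  have hBdet : IsUnit B.det :=
    isUnit_iff_ne_zero.2 (det_one_sub_submatrix_succAbove_ne_zero P hP hνpos hlam hflow m)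
  have hQa : (1 - P) *ᵥ a m = Pi.single m (1 - ∑ l, a m l * P m l) := by
    rw [mulVec_eq_single_of_submatrix_mulVec _ m (x := a m) ?_]
    · rw [sub_mulVec, one_mulVec, Pi.sub_apply, ha_diag]
      simp only [mulVec, dotProduct, mul_comm]
    · rw [show a m ∘ m.succAbove = B⁻¹ *ᵥ _ from funext (ha m), mulVec_mulVec,
        mul_nonsing_inv _ hBdet, one_mulVec]
      ext i
      simp [one_apply_ne (Fin.succAbove_ne m i), ha_diag]
  have main : (1 - ∑ l, a m l * P m l) * ν m = ∑ l, a m l * lam l :=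
    calc (1 - ∑ l, a m l * P m l) * ν m = ν ⬝ᵥ (1 - P) *ᵥ a m := by
          rw [hQa, dotProduct_single, mul_comm]
      _ = ∑ l, a m l * lam l := by rw [dotProduct_mulVec, hflow, dotProduct_comm]; rfl
  exact ⟨main, fun θm hθ => Real.exp_neg_eq_div_of_exp_eq main hθ⟩

/-- Part of Theorem 2.1 (the:H): for every `m`,
`(1 − Σ_l a_{ml} p_{ml}) ν_m = Σ_l a_{ml} λ_l`; equivalently, if
`e^{θ_m^{(m)}} = (1 − Σ_l a_{ml} p_{ml}) μ_m / (Σ_l a_{ml} λ_l)` then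
`e^{−θ_m^{(m)}} = ρ_m = ν_m / μ_m`. Here `ν = (I − Pᵀ)⁻¹ λ`, `a m m = 1` and,
for `l ≠ m`, `(a_{ml})_{l≠m} = ((I−P)(m|m))⁻¹ p_{·m}`. -/
theorem stmt_5 {K : ℕ} (P : Matrix (Fin (K + 1)) (Fin (K + 1)) ℝ)
    (hP : ∀ k l, 0 ≤ P k l) (hProw : ∀ k, ∑ l, P k l ≤ 1)
    (hspec : ∀ z ∈ spectrum ℂ (P.map Complex.ofReal), ‖z‖ < 1)
    (lam mu : Fin (K + 1) → ℝ) (hlam : ∀ k, 0 < lam k) (hmu : ∀ k, 0 < mu k)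
    (ν : Fin (K + 1) → ℝ)
    (hν : ν = ((1 : Matrix (Fin (K + 1)) (Fin (K + 1)) ℝ) - Pᵀ)⁻¹ *ᵥ lam)
    (hνpos : ∀ k, 0 < ν k)
    (a : Fin (K + 1) → Fin (K + 1) → ℝ)
    (ha_diag : ∀ m, a m m = 1)
    (ha : ∀ (m : Fin (K + 1)) (i : Fin K),
      a m (m.succAbove i)
        = ((((1 : Matrix (Fin (K + 1)) (Fin (K + 1)) ℝ) - P).submatrix m.succAbove m.succAbove)⁻¹
            *ᵥ (fun j => P (m.succAbove j) m)) i)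
    (m : Fin (K + 1)) :
    (1 - ∑ l, a m l * P m l) * ν m = ∑ l, a m l * lam l
      ∧ ∀ θm : ℝ,
          Real.exp θm = (1 - ∑ l, a m l * P m l) * mu m / (∑ l, a m l * lam l) →
          Real.exp (-θm) = ν m / mu m :=
  stmt_5_general P hP lam mu hlam ν hν hνpos a ha_diag ha m
end

section
/- Let θ* ∈ ℝ^K be the vector with components θ*_k = ln(μ_k/ν_k) = −ln ρ_k. Then H_0(θ*) = 0. -/
/-!
Writing `ν = λ + Pᵀν` (the traffic equation, solvable because the spectral bound makes `I − Pᵀ`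
invertible), the choice `e^{θ*_k} ν_k = μ_k` turns `h_k(θ*) μ_k` into
`ν_k Σ_l (e^{θ*_l} − 1) p_{kl} + ν_k − μ_k`. Summing over `k` and using the traffic equation,
`H₀(θ*)` collapses to `Σ_l (e^{θ*_l} ν_l − μ_l) = 0`.
-/

open Matrix Real

namespace Matrix

variable {n : Type*} [Fintype n] [DecidableEq n]

theorem isUnit_det_one_sub_of_spectrum_norm_lt_one (P : Matrix n n ℝ)
    (hspec : ∀ z ∈ spectrum ℂ (P.map Complex.ofReal), ‖z‖ < 1) : IsUnit (1 - P).det := by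
  have hone : (1 : ℂ) ∉ spectrum ℂ (P.map Complex.ofReal) := fun h => by simpa using hspec 1 h
  rw [spectrum.mem_iff, not_not, Algebra.algebraMap_eq_smul_one, one_smul,
    isUnit_iff_isUnit_det] at hone
  have hdet : (1 - P.map Complex.ofReal).det = ((1 - P).det : ℂ) := by
    rw [← Complex.ofRealHom_eq_coe, RingHom.map_det, RingHom.mapMatrix_apply,
      Matrix.map_sub _ (map_sub _), Matrix.map_one _ (map_zero _) (map_one _)]
    rfl
  rw [hdet, isUnit_iff_ne_zero, Complex.ofReal_ne_zero] at hone
  exact hone.isUnit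

end Matrix

namespace Network

variable {ι : Type*} [Fintype ι]

noncomputable def h (P : Matrix ι ι ℝ) (θ : ι → ℝ) (k : ι) : ℝ :=
  exp (-θ k) * ((∑ l, (exp (θ l) - 1) * P k l) + 1) - 1

noncomputable def H₀ (P : Matrix ι ι ℝ) (lam mu θ : ι → ℝ) : ℝ :=
  (∑ k, (exp (θ k) - 1) * lam k) + ∑ k, h P θ k * mu k

theorem h_mul_exp_mul (P : Matrix ι ι ℝ) (θ ν : ι → ℝ) (k : ι) :
    h P θ k * (exp (θ k) * ν k)
      = ∑ l, (exp (θ l) - 1) * P k l * ν k + (ν k - exp (θ k) * ν k) := by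
  rw [h, ← Finset.sum_mul, exp_neg]
  field_simp
  ring

theorem sum_mul_eq_sub_of_one_sub_transpose_mulVec [DecidableEq ι] {P : Matrix ι ι ℝ}
    {lam ν : ι → ℝ} (hν : (1 - Pᵀ) *ᵥ ν = lam) (l : ι) : ∑ k, P k l * ν k = ν l - lam l := by
  rw [← hν, sub_mulVec, one_mulVec, Pi.sub_apply, sub_sub_cancel, mulVec_transpose]
  simp only [vecMul, dotProduct, mul_comm]

theorem H₀_eq_zero [DecidableEq ι] (P : Matrix ι ι ℝ) (lam mu θ ν : ι → ℝ)
    (hν : (1 - Pᵀ) *ᵥ ν = lam) (hθ : ∀ k, exp (θ k) * ν k = mu k) :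
    H₀ P lam mu θ = 0 := by
  have hflow : ∑ k, ∑ l, (exp (θ l) - 1) * P k l * ν k
      = ∑ l, (exp (θ l) - 1) * (ν l - lam l) := by
    rw [Finset.sum_comm]
    refine Finset.sum_congr rfl fun l _ => ?_
    rw [← sum_mul_eq_sub_of_one_sub_transpose_mulVec hν l, Finset.mul_sum]
    simp only [mul_assoc]
  calc H₀ P lam mu θ
      = ∑ k, (exp (θ k) - 1) * lam k
          + ∑ k, (∑ l, (exp (θ l) - 1) * P k l * ν k + (ν k - exp (θ k) * ν k)) := by
        simp only [H₀, ← hθ, h_mul_exp_mul]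
    _ = ∑ k, ((exp (θ k) - 1) * lam k
          + ((exp (θ k) - 1) * (ν k - lam k) + (ν k - exp (θ k) * ν k))) := by
        rw [Finset.sum_add_distrib, hflow, ← Finset.sum_add_distrib, ← Finset.sum_add_distrib]
    _ = 0 := Finset.sum_eq_zero fun k _ => by ring

end Network

theorem stmt_6_general {K : ℕ} (P : Matrix (Fin (K + 1)) (Fin (K + 1)) ℝ)
    (hspec : ∀ z ∈ spectrum ℂ (P.map Complex.ofReal), ‖z‖ < 1)
    (lam mu : Fin (K + 1) → ℝ) (hmu : ∀ k, 0 < mu k)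
    (ν : Fin (K + 1) → ℝ)
    (hν : ν = ((1 : Matrix (Fin (K + 1)) (Fin (K + 1)) ℝ) - Pᵀ)⁻¹ *ᵥ lam)
    (hνpos : ∀ k, 0 < ν k)
    (θstar : Fin (K + 1) → ℝ) (hθ : ∀ k, θstar k = Real.log (mu k / ν k)) :
    (∑ k, (Real.exp (θstar k) - 1) * lam k)
      + ∑ k, (Real.exp (-θstar k) * ((∑ l, (Real.exp (θstar l) - 1) * P k l) + 1) - 1) * mu k
      = 0 := by
  have hdet : IsUnit (1 - Pᵀ).det := by
    rw [← transpose_one, ← transpose_sub, det_transpose]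
    exact isUnit_det_one_sub_of_spectrum_norm_lt_one P hspec
  refine Network.H₀_eq_zero P lam mu θstar ν ?_ fun k => ?_
  · rw [hν, mulVec_mulVec, mul_nonsing_inv _ hdet, one_mulVec]
  · rw [hθ, exp_log (div_pos (hmu k) (hνpos k)), div_mul_cancel₀ _ (hνpos k).ne']

/-- Theorem 2.1 (the:H), first claim: with `θ*_k = ln(μ_k/ν_k)`, one has `H₀(θ*) = 0`,
where `H₀(θ) = Σ_k (e^{θ_k} − 1) λ_k + Σ_k h_k(θ) μ_k` and
`h_k(θ) = e^{−θ_k}(Σ_l (e^{θ_l} − 1) p_{kl} + 1) − 1`, `ν = (I − Pᵀ)⁻¹ λ`. -/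
theorem stmt_6 {K : ℕ} (P : Matrix (Fin (K + 1)) (Fin (K + 1)) ℝ)
    (hP : ∀ k l, 0 ≤ P k l) (hProw : ∀ k, ∑ l, P k l ≤ 1)
    (hspec : ∀ z ∈ spectrum ℂ (P.map Complex.ofReal), ‖z‖ < 1)
    (lam mu : Fin (K + 1) → ℝ) (hlam : ∀ k, 0 < lam k) (hmu : ∀ k, 0 < mu k)
    (ν : Fin (K + 1) → ℝ)
    (hν : ν = ((1 : Matrix (Fin (K + 1)) (Fin (K + 1)) ℝ) - Pᵀ)⁻¹ *ᵥ lam)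
    (hνpos : ∀ k, 0 < ν k)
    (θstar : Fin (K + 1) → ℝ) (hθ : ∀ k, θstar k = Real.log (mu k / ν k)) :
    (∑ k, (Real.exp (θstar k) - 1) * lam k)
      + ∑ k, (Real.exp (-θstar k) * ((∑ l, (Real.exp (θstar l) - 1) * P k l) + 1) - 1) * mu k
      = 0 :=
  stmt_6_general P hspec lam mu hmu ν hν hνpos θstar hθ
end

section
/- Let J ⊆ {1,…,K} and let θ̃ ∈ ℝ^K be any vector satisfying θ̃_k = ln(μ_k/ν_k) for every k ∉ J and h_k(θ̃) = 0 for every k ∈ J. Then H_0(θ̃) = 0. -/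
/-!
Since `ν = (I - Pᵀ)⁻¹ λ` solves the traffic equations `νᵀ P = νᵀ - λᵀ`, it suffices that every
coordinate satisfies `h_k(θ̃) μ_k = ν_k (Σ_l (e^{θ̃_l} - 1) p_{kl} - (e^{θ̃_k} - 1))`: for `k ∈ J`
both sides vanish, and for `k ∉ J` it is the identity `e^{θ̃_k} = μ_k / ν_k`. Summing over `k`
and applying the traffic equations to the first term leaves exactly `-Σ_k (e^{θ̃_k} - 1) λ_k`.
-/

open Matrix

section TrafficEquations

variable {n : Type*} [Fintype n]

theorem isUnit_one_sub_of_one_notMem_spectrum [DecidableEq n]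
    {P : Matrix n n ℝ} (h : (1 : ℂ) ∉ spectrum ℂ (P.map Complex.ofReal)) :
    IsUnit (1 - P) := by
  have hC : IsUnit (Complex.ofRealHom.mapMatrix (1 - P)) := by
    rw [map_sub, map_one, ← map_one (algebraMap ℂ _)]
    exact spectrum.notMem_iff.mp h
  rw [isUnit_iff_isUnit_det, ← isUnit_map_iff Complex.ofRealHom, RingHom.map_det]
  rwa [← isUnit_iff_isUnit_det]

theorem vecMul_eq_sub_of_eq_inv_mulVec [DecidableEq n]
    {P : Matrix n n ℝ} (hP : IsUnit (1 - P)) {ν lam : n → ℝ} (hν : ν = (1 - Pᵀ)⁻¹ *ᵥ lam) :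
    ν ᵥ* P = ν - lam := by
  have hPT : IsUnit (1 - Pᵀ).det := by
    rwa [← transpose_one, ← transpose_sub, det_transpose, ← isUnit_iff_isUnit_det]
  have : (1 - Pᵀ) *ᵥ ν = lam := by
    rw [hν, mulVec_mulVec, mul_nonsing_inv _ hPT, one_mulVec]
  rw [← this, sub_mulVec, one_mulVec, mulVec_transpose, sub_sub_cancel]

theorem dotProduct_add_dotProduct_mulVec_sub_eq_zero
    {P : Matrix n n ℝ} {ν lam : n → ℝ} (h : ν ᵥ* P = ν - lam) (x : n → ℝ) :
    x ⬝ᵥ lam + ν ⬝ᵥ (P *ᵥ x - x) = 0 := by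
  rw [dotProduct_sub, dotProduct_mulVec, h, sub_dotProduct, dotProduct_comm x lam]
  ring

end TrafficEquations

theorem exp_neg_mul_add_one_sub_one_mul_eq_of_eq_zero {t S : ℝ}
    (h : Real.exp (-t) * (S + 1) - 1 = 0) (m c : ℝ) :
    (Real.exp (-t) * (S + 1) - 1) * m = c * (S - (Real.exp t - 1)) := by
  have hS : S + 1 = Real.exp t := by
    rw [Real.exp_neg] at h
    field_simp at h
    linarith
  rw [h, ← hS]
  ring

theorem exp_neg_mul_add_one_sub_one_mul_eq_of_exp_eq {t S m c : ℝ} (hm : m ≠ 0) (hc : c ≠ 0)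
    (ht : Real.exp t = m / c) :
    (Real.exp (-t) * (S + 1) - 1) * m = c * (S - (Real.exp t - 1)) := by
  rw [Real.exp_neg, ht, inv_div]
  field_simp
  ring

theorem stmt_7_general {K : ℕ} (P : Matrix (Fin (K + 1)) (Fin (K + 1)) ℝ)
    (hspec : ∀ z ∈ spectrum ℂ (P.map Complex.ofReal), ‖z‖ < 1)
    (lam mu : Fin (K + 1) → ℝ) (hmu : ∀ k, 0 < mu k)
    (ν : Fin (K + 1) → ℝ)
    (hν : ν = ((1 : Matrix (Fin (K + 1)) (Fin (K + 1)) ℝ) - Pᵀ)⁻¹ *ᵥ lam)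
    (hνpos : ∀ k, 0 < ν k)
    (J : Finset (Fin (K + 1))) (θ : Fin (K + 1) → ℝ)
    (hout : ∀ k ∉ J, θ k = Real.log (mu k / ν k))
    (hin : ∀ k ∈ J,
      Real.exp (-θ k) * ((∑ l, (Real.exp (θ l) - 1) * P k l) + 1) - 1 = 0) :
    (∑ k, (Real.exp (θ k) - 1) * lam k)
      + ∑ k, (Real.exp (-θ k) * ((∑ l, (Real.exp (θ l) - 1) * P k l) + 1) - 1) * mu k
      = 0 := by
  set x : Fin (K + 1) → ℝ := fun l => Real.exp (θ l) - 1
  have hflow : ν ᵥ* P = ν - lam :=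
    vecMul_eq_sub_of_eq_inv_mulVec
      (isUnit_one_sub_of_one_notMem_spectrum fun h1 => by simpa using hspec 1 h1) hν
  have hterm : ∀ k, (Real.exp (-θ k) * ((∑ l, x l * P k l) + 1) - 1) * mu k
      = ν k * ((P *ᵥ x) k - x k) := by
    intro k
    rw [← vecMul_transpose]
    by_cases hk : k ∈ J
    · exact exp_neg_mul_add_one_sub_one_mul_eq_of_eq_zero (hin k hk) _ _
    · refine exp_neg_mul_add_one_sub_one_mul_eq_of_exp_eq (hmu k).ne' (hνpos k).ne' ?_
      rw [hout k hk, Real.exp_log (div_pos (hmu k) (hνpos k))]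
  rw [Finset.sum_congr rfl fun k _ => hterm k]
  exact dotProduct_add_dotProduct_mulVec_sub_eq_zero hflow x

/-- Lemma 2.4 (le:subspace): if `θ̃ = θ̃^{(J)}` satisfies `θ̃_k = ln(μ_k/ν_k)` for `k ∉ J`
and `h_k(θ̃) = 0` for `k ∈ J`, then `H₀(θ̃) = 0`, where
`H₀(θ) = Σ_k (e^{θ_k} − 1) λ_k + Σ_k h_k(θ) μ_k`,
`h_k(θ) = e^{−θ_k}(Σ_l (e^{θ_l} − 1) p_{kl} + 1) − 1`, and `ν = (I − Pᵀ)⁻¹ λ`. -/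
theorem stmt_7 {K : ℕ} (P : Matrix (Fin (K + 1)) (Fin (K + 1)) ℝ)
    (hP : ∀ k l, 0 ≤ P k l) (hProw : ∀ k, ∑ l, P k l ≤ 1)
    (hspec : ∀ z ∈ spectrum ℂ (P.map Complex.ofReal), ‖z‖ < 1)
    (lam mu : Fin (K + 1) → ℝ) (hlam : ∀ k, 0 < lam k) (hmu : ∀ k, 0 < mu k)
    (ν : Fin (K + 1) → ℝ)
    (hν : ν = ((1 : Matrix (Fin (K + 1)) (Fin (K + 1)) ℝ) - Pᵀ)⁻¹ *ᵥ lam)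
    (hνpos : ∀ k, 0 < ν k)
    (J : Finset (Fin (K + 1))) (θ : Fin (K + 1) → ℝ)
    (hout : ∀ k ∉ J, θ k = Real.log (mu k / ν k))
    (hin : ∀ k ∈ J,
      Real.exp (-θ k) * ((∑ l, (Real.exp (θ l) - 1) * P k l) + 1) - 1 = 0) :
    (∑ k, (Real.exp (θ k) - 1) * lam k)
      + ∑ k, (Real.exp (-θ k) * ((∑ l, (Real.exp (θ l) - 1) * P k l) + 1) - 1) * mu k
      = 0 :=
  stmt_7_general P hspec lam mu hmu ν hν hνpos J θ hout hin
end

section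
/- If A = (a_{ij}) is a real K×K matrix with nonnegative entries such that every column sum satisfies Σ_{i=1}^K a_{ij} ≤ 1 for each j, then det(I − A) ≥ 0. -/
open Matrix

/-- If `A` is a real `K×K` matrix with nonnegative entries whose column sums are
all at most 1, then `det(I − A) ≥ 0`. -/
theorem stmt_10 {K : ℕ} (A : Matrix (Fin K) (Fin K) ℝ)
    (hA : ∀ i j, 0 ≤ A i j)
    (hcol : ∀ j, ∑ i, A i j ≤ 1) :
    0 ≤ ((1 : Matrix (Fin K) (Fin K) ℝ) - A).det := by
  set f : ℝ → ℝ := fun t => ((1 : Matrix (Fin K) (Fin K) ℝ) - t • A).det with hf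
  have hcont : Continuous f := by
    apply Continuous.matrix_det
    exact continuous_const.sub (continuous_id.smul continuous_const)
  have hAkk : ∀ k, A k k ≤ 1 := fun k =>
    le_trans (Finset.single_le_sum (fun i _ => hA i k) (Finset.mem_univ k)) (hcol k)
  have hne : ∀ t ∈ Set.Ico (0:ℝ) 1, f t ≠ 0 := by
    rintro t ⟨ht0, ht1⟩
    apply det_ne_zero_of_sum_col_lt_diag
    intro k
    have hdiag : (0:ℝ) < 1 - t * A k k := by
      have : t * A k k ≤ t * 1 := mul_le_mul_of_nonneg_left (hAkk k) ht0
      nlinarith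
    have h1 : ∀ i ∈ Finset.univ.erase k,
        ‖((1 : Matrix (Fin K) (Fin K) ℝ) - t • A) i k‖ = t * A i k := by
      intro i hi
      have : i ≠ k := Finset.ne_of_mem_erase hi
      simp [Matrix.sub_apply, Matrix.one_apply_ne this, Matrix.smul_apply,
        Real.norm_eq_abs, abs_mul, abs_of_nonneg ht0, abs_of_nonneg (hA i k)]
    rw [Finset.sum_congr rfl h1]
    have h2 : ((1 : Matrix (Fin K) (Fin K) ℝ) - t • A) k k = 1 - t * A k k := by
      simp [Matrix.sub_apply, Matrix.one_apply_eq, Matrix.smul_apply, smul_eq_mul]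
    rw [h2, Real.norm_eq_abs, abs_of_pos hdiag]
    have hsum : ∑ i ∈ Finset.univ.erase k, t * A i k
        = t * (∑ i, A i k - A k k) := by
      rw [Finset.sum_erase_eq_sub (Finset.mem_univ k), ← Finset.mul_sum, mul_sub]
    rw [hsum]
    have hc := hcol k
    nlinarith [hA k k]
  have hpos : ∀ t ∈ Set.Ico (0:ℝ) 1, 0 < f t := by
    rintro t ⟨ht0, ht1⟩
    by_contra hle
    push_neg at hle
    have h01 : (0:ℝ) ∈ Set.Icc (f t) (f 0) := by
      constructor
      · exact hle
      · simp [hf]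
    have := intermediate_value_Icc' ht0 hcont.continuousOn h01
    obtain ⟨s, hs, hfs⟩ := this
    exact hne s ⟨hs.1, lt_of_le_of_lt hs.2 ht1⟩ hfs
  have hlim : Filter.Tendsto f (nhdsWithin 1 (Set.Iio 1)) (nhds (f 1)) :=
    hcont.continuousAt.continuousWithinAt
  have hev : ∀ᶠ t in nhdsWithin 1 (Set.Iio 1), 0 ≤ f t := by
    filter_upwards [Ioo_mem_nhdsLT_of_mem (Set.mem_Ioc.mpr ⟨zero_lt_one, le_refl 1⟩)]
      with t ht
    exact le_of_lt (hpos t ⟨le_of_lt ht.1, ht.2⟩)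
  have h1 : 0 ≤ f 1 := ge_of_tendsto hlim hev
  simpa [hf] using h1
end

section
/- Let θ* ∈ ℝ^K with θ*_k = ln(μ_k/ν_k). For every T > 0, every r ∈ ℝ_+^K, and every Lipschitz function q : [0,T] → ℝ_+^K with q(0) = 0 and q(T) = r, one has ∫_0^T L(q(t), q'(t)) dt ≥ θ* · r, where q' is the almost-everywhere defined derivative of q and the integral is taken in [0, +∞] (note L ≥ 0 since L_J(y) ≥ 0 for all y). -/
/-!
For every zero pattern `J`, take `θ_J = log (1 + β)` where `β` is `P`-harmonic on `J`
(`β_k = (P β)_k` for `k ∈ J`) with boundary values `β_k = μ_k / ν_k - 1` off `J`. The balance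
equation `ν = λ + ν P` makes `H_J(θ_J) = 0`. Existence of `β`, and `β > -1`, both come from the fact
that a nonnegative `z` with `z ≤ P z` vanishes: pair with `ν` to get `λ ⬝ z ≤ 0`.

Since `θ_J = θ*` off `J`, and a derivative vanishes at almost every point of the zero set where it
exists, `L(q, q') ≥ θ_J ⬝ q' - H_J(θ_J) = θ* ⬝ q'` almost everywhere; integrating and applying the
fundamental theorem of calculus for Lipschitz functions gives `∫ L(q, q') ≥ θ* ⬝ r`.
-/

open Matrix MeasureTheory Set Filter Topology

section SubstochasticMatrix

variable {ι : Type*} [Fintype ι] {P : Matrix ι ι ℝ} {lam ν : ι → ℝ}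

theorem Matrix.mulVec_eq_of_eq_nonsing_inv_mulVec [DecidableEq ι] {A : Matrix ι ι ℝ} {b : ι → ℝ}
    (hν : ν = A⁻¹ *ᵥ b) (hν0 : ν ≠ 0) : A *ᵥ ν = b := by
  by_cases hA : IsUnit A.det
  · rw [hν, mulVec_mulVec, mul_nonsing_inv _ hA, one_mulVec]
  · rw [nonsing_inv_apply_not_isUnit _ hA, zero_mulVec] at hν
    exact absurd hν hν0

theorem eq_zero_of_le_mulVec (hν : 0 ≤ ν) (hlam : ∀ k, 0 < lam k) (hbal : ν = lam + ν ᵥ* P)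
    {z : ι → ℝ} (hz : 0 ≤ z) (hsub : z ≤ P *ᵥ z) : z = 0 := by
  have hle : ν ⬝ᵥ z ≤ ν ⬝ᵥ z - lam ⬝ᵥ z := calc
    ν ⬝ᵥ z ≤ ν ⬝ᵥ (P *ᵥ z) := dotProduct_le_dotProduct_of_nonneg_left hsub hν
    _ = (ν - lam) ⬝ᵥ z := by rw [dotProduct_mulVec, eq_sub_of_add_eq' hbal.symm]
    _ = ν ⬝ᵥ z - lam ⬝ᵥ z := sub_dotProduct _ _ _
  have hzero : ∑ k, lam k * z k = 0 :=
    le_antisymm (by simpa [dotProduct] using hle)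
      (Finset.sum_nonneg fun k _ => mul_nonneg (hlam k).le (hz k))
  funext k
  have := (Finset.sum_eq_zero_iff_of_nonneg fun l _ => mul_nonneg (hlam l).le (hz l)).1 hzero k
    (Finset.mem_univ k)
  exact (mul_eq_zero.1 this).resolve_left (hlam k).ne'

theorem eq_add_vecMul_of_eq_inv_mulVec [DecidableEq ι] (hν : ν = (1 - Pᵀ)⁻¹ *ᵥ lam)
    (hν0 : ν ≠ 0) : ν = lam + ν ᵥ* P := by
  have h := mulVec_eq_of_eq_nonsing_inv_mulVec hν hν0
  rw [sub_mulVec, one_mulVec, mulVec_transpose] at h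
  rw [← h, sub_add_cancel]

theorem abs_mulVec_le_mulVec_abs (hP : ∀ k l, 0 ≤ P k l) (w : ι → ℝ) : |P *ᵥ w| ≤ P *ᵥ |w| :=
  fun k => (Finset.abs_sum_le_sum_abs _ _).trans_eq <| Finset.sum_congr rfl fun l _ => by
    rw [abs_mul, abs_of_nonneg (hP k l), Pi.abs_apply]

theorem exists_harmonic_extension [DecidableEq ι] (hP : ∀ k l, 0 ≤ P k l) (hν : 0 ≤ ν)
    (hlam : ∀ k, 0 < lam k) (hbal : ν = lam + ν ᵥ* P) (J : Finset ι) (c : ι → ℝ) :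
    ∃ β : ι → ℝ, (∀ k ∈ J, β k = (P *ᵥ β) k) ∧ ∀ k ∉ J, β k = c k := by
  set M := 1 - diagonal (fun k => if k ∈ J then (1 : ℝ) else 0) * P
  have hM : ∀ β k, (M *ᵥ β) k = β k - if k ∈ J then (P *ᵥ β) k else 0 := fun β k => by
    simp only [M, sub_mulVec, one_mulVec, ← mulVec_mulVec, Pi.sub_apply, mulVec_diagonal]
    split_ifs <;> simp
  have hinj : Function.Injective M.mulVec := by
    refine (injective_iff_map_eq_zero M.mulVecLin).2 fun w hw => ?_
    have hfix : ∀ k, w k = if k ∈ J then (P *ᵥ w) k else 0 := fun k =>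
      sub_eq_zero.1 ((hM w k).symm.trans (congrFun hw k))
    have habs : |w| = 0 := eq_zero_of_le_mulVec hν hlam hbal (abs_nonneg w) fun k => ?_
    · funext k
      simpa using congrFun habs k
    have hPw := abs_mulVec_le_mulVec_abs hP w k
    rw [Pi.abs_apply, hfix k]
    split_ifs
    · exact hPw
    · simpa using (abs_nonneg _).trans hPw
  obtain ⟨β, hβ⟩ := mulVec_surjective_iff_isUnit.2 (mulVec_injective_iff_isUnit.1 hinj)
    (fun k => if k ∈ J then 0 else c k)
  refine ⟨β, fun k hk => ?_, fun k hk => ?_⟩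
  · simpa [hM, hk, sub_eq_zero] using congrFun hβ k
  · simpa [hM, hk] using congrFun hβ k

theorem le_of_harmonic (hP : ∀ k l, 0 ≤ P k l) (hProw : ∀ k, ∑ l, P k l ≤ 1) (hν : 0 ≤ ν)
    (hlam : ∀ k, 0 < lam k) (hbal : ν = lam + ν ᵥ* P) {J : Finset ι} {β : ι → ℝ}
    (hβ : ∀ k ∈ J, β k = (P *ᵥ β) k) {a : ℝ} (ha : a ≤ 0) (haβ : ∀ k ∉ J, a ≤ β k) (k : ι) :
    a ≤ β k := by
  set z : ι → ℝ := fun l => max (a - β l) 0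
  have hPz : ∀ k, 0 ≤ (P *ᵥ z) k := fun k =>
    dotProduct_nonneg_of_nonneg (hP k) fun l => le_max_right _ _
  have hz : z = 0 := by
    refine eq_zero_of_le_mulVec hν hlam hbal (fun l => le_max_right _ _) fun k => max_le ?_ (hPz k)
    by_cases hk : k ∈ J
    · have hrow : a ≤ a * ∑ l, P k l := by nlinarith [hProw k]
      calc a - β k ≤ a * ∑ l, P k l - (P *ᵥ β) k := by rw [hβ k hk]; linarith
        _ = (P *ᵥ fun l => a - β l) k := by
          simp only [mulVec, dotProduct, mul_sub, Finset.sum_sub_distrib, Finset.mul_sum, mul_comm]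
        _ ≤ (P *ᵥ z) k := dotProduct_le_dotProduct_of_nonneg_left (fun l => le_max_left _ _) (hP k)
    · linarith [haβ k hk, hPz k]
  have := congrFun hz k
  simp only [z, Pi.zero_apply, max_eq_right_iff] at this
  linarith

end SubstochasticMatrix

section Hamiltonian

variable {ι : Type*} [Fintype ι]

noncomputable section

-- `hFun P θ k`, `hamiltonian P lam mu J θ` and `lagrangian P lam mu x y` are the paper's
-- `h_k(θ)`, `H_J(θ)` and `L(x, y)`.
def hFun (P : Matrix ι ι ℝ) (θ : ι → ℝ) (k : ι) : ℝ :=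
  Real.exp (-θ k) * ((∑ l, (Real.exp (θ l) - 1) * P k l) + 1) - 1

def hamiltonian [DecidableEq ι] (P : Matrix ι ι ℝ) (lam mu : ι → ℝ) (J : Finset ι) (θ : ι → ℝ) :
    ℝ :=
  ∑ k, (Real.exp (θ k) - 1) * lam k + ∑ k ∈ J, max (hFun P θ k) 0 * mu k
    + ∑ k ∈ Jᶜ, hFun P θ k * mu k

open scoped Classical in
def lagrangian [DecidableEq ι] (P : Matrix ι ι ℝ) (lam mu x y : ι → ℝ) : ENNReal :=
  ∑ J : Finset ι, if (∀ i ∈ J, x i = 0) ∧ (∀ i ∉ J, 0 < x i) then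
    ⨆ θ : ι → ℝ, ENNReal.ofReal (θ ⬝ᵥ y - hamiltonian P lam mu J θ) else 0

end

variable {P : Matrix ι ι ℝ} {lam mu ν : ι → ℝ}

theorem hFun_log_one_add {β : ι → ℝ} (hβ : ∀ k, -1 < β k) (k : ι) :
    hFun P (fun l => Real.log (1 + β l)) k = ((P *ᵥ β) k - β k) / (1 + β k) := by
  have hpos : ∀ l, 0 < 1 + β l := fun l => by linarith [hβ l]
  have hsum : ∑ l, (Real.exp (Real.log (1 + β l)) - 1) * P k l = (P *ᵥ β) k := by
    simp only [Real.exp_log (hpos _), add_sub_cancel_left, mulVec, dotProduct, mul_comm]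
  rw [hFun, hsum, Real.exp_neg, Real.exp_log (hpos k)]
  field_simp [(hpos k).ne']
  ring

theorem hamiltonian_log_one_add_eq_zero [DecidableEq ι] (hbal : ν = lam + ν ᵥ* P)
    {J : Finset ι} {β : ι → ℝ} (hβ : ∀ k, -1 < β k) (hJ : ∀ k ∈ J, β k = (P *ᵥ β) k)
    (hout : ∀ k ∉ J, mu k = ν k * (1 + β k)) :
    hamiltonian P lam mu J (fun l => Real.log (1 + β l)) = 0 := by
  have hpos : ∀ l, 0 < 1 + β l := fun l => by linarith [hβ l]
  have hlin : ∑ k, (Real.exp (Real.log (1 + β k)) - 1) * lam k = β ⬝ᵥ lam := by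
    simp only [Real.exp_log (hpos _), add_sub_cancel_left, dotProduct]
  have hin : ∑ k ∈ J, max (hFun P (fun l => Real.log (1 + β l)) k) 0 * mu k = 0 :=
    Finset.sum_eq_zero fun k hk => by simp [hFun_log_one_add hβ, ← hJ k hk]
  have hoff : ∑ k ∈ Jᶜ, hFun P (fun l => Real.log (1 + β l)) k * mu k
      = ν ⬝ᵥ (P *ᵥ β) - ν ⬝ᵥ β := by
    rw [← dotProduct_sub, dotProduct, ← Finset.sum_compl_add_sum J,
      Finset.sum_eq_zero (s := J) fun k hk => by simp [← hJ k hk], add_zero]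
    refine Finset.sum_congr rfl fun k hk => ?_
    rw [hFun_log_one_add hβ, hout k (Finset.mem_compl.1 hk), Pi.sub_apply]
    field_simp [(hpos k).ne']
  rw [hamiltonian, hlin, hin, hoff, dotProduct_mulVec, eq_sub_of_add_eq' hbal.symm,
    sub_dotProduct, dotProduct_comm β]
  ring

theorem exists_hamiltonian_eq_zero [DecidableEq ι] (hP : ∀ k l, 0 ≤ P k l)
    (hProw : ∀ k, ∑ l, P k l ≤ 1) (hlam : ∀ k, 0 < lam k) (hmu : ∀ k, 0 < mu k) (hν : ∀ k, 0 < ν k)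
    (hbal : ν = lam + ν ᵥ* P) (J : Finset ι) :
    ∃ θ : ι → ℝ, hamiltonian P lam mu J θ = 0 ∧ ∀ k ∉ J, θ k = Real.log (mu k / ν k) := by
  have hν0 : 0 ≤ ν := fun k => (hν k).le
  set c : ι → ℝ := fun k => mu k / ν k - 1
  obtain ⟨β, hβJ, hβc⟩ := exists_harmonic_extension hP hν0 hlam hbal J c
  set s := insert 0 (Finset.univ.image c)
  have hs : s.Nonempty := Finset.insert_nonempty _ _
  have hbound : -1 < s.min' hs := by
    simp only [Finset.lt_min'_iff, s, Finset.mem_insert, Finset.mem_image]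
    rintro y (rfl | ⟨k, -, rfl⟩)
    · norm_num
    · simp only [c]; linarith [div_pos (hmu k) (hν k)]
  have hβ : ∀ k, -1 < β k := fun k => hbound.trans_le <|
    le_of_harmonic hP hProw hν0 hlam hbal hβJ (s.min'_le _ (Finset.mem_insert_self _ _))
      (fun k hk => hβc k hk ▸ s.min'_le _ (by simp [s])) k
  have hratio : ∀ k ∉ J, 1 + β k = mu k / ν k := fun k hk => by rw [hβc k hk]; ring
  refine ⟨fun k => Real.log (1 + β k), hamiltonian_log_one_add_eq_zero hbal hβ hβJ
    fun k hk => ?_, fun k hk => congrArg Real.log (hratio k hk)⟩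
  rw [hratio k hk, mul_div_cancel₀ _ (hν k).ne']

theorem lagrangian_eq_iSup [DecidableEq ι] {x : ι → ℝ} (hx : 0 ≤ x) (y : ι → ℝ) :
    lagrangian P lam mu x y = ⨆ θ : ι → ℝ,
      ENNReal.ofReal (θ ⬝ᵥ y - hamiltonian P lam mu (Finset.univ.filter (x · = 0)) θ) := by
  have hzero : ∀ J : Finset ι,
      ((∀ i ∈ J, x i = 0) ∧ (∀ i ∉ J, 0 < x i)) ↔ J = Finset.univ.filter (x · = 0) := by
    refine fun J => ⟨fun ⟨hJ, hJc⟩ => Finset.ext fun i => ?_, ?_⟩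
    · simp only [Finset.mem_filter, Finset.mem_univ, true_and]
      exact ⟨hJ i, fun hi => by_contra fun hiJ => (hJc i hiJ).ne' hi⟩
    · rintro rfl
      simpa using fun i hi => (hx i).lt_of_ne' hi
  simp only [lagrangian, hzero, Finset.sum_ite_eq', Finset.mem_univ, if_true]

end Hamiltonian

-- Only countably many points of the zero set are isolated in it from the right; at every other
-- point the zero set accumulates, so the derivative is determined by `f` on it.
theorem ae_eq_zero_of_hasDerivAt_of_eq_zero {F : Type*} [NormedAddCommGroup F] [NormedSpace ℝ F]
    (f : ℝ → F) : ∀ᵐ t, f t = 0 → ∀ v, HasDerivAt f v t → v = 0 := by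
  set s := f ⁻¹' {0}
  filter_upwards [(countable_setOfPred_isolated_right_within (s := s)).ae_notMem volume]
    with t hiso ht v hv
  have hacc : AccPt t (𝓟 s) := by
    rw [accPt_principal_iff_nhdsWithin]
    have : (𝓝[s ∩ Ioi t] t).NeBot := ⟨fun h => hiso ⟨ht, h⟩⟩
    exact this.mono (nhdsWithin_mono _ fun x hx => ⟨hx.1, hx.2.ne'⟩)
  exact hacc.uniqueDiffWithinAt.eq_deriv s hv.hasDerivWithinAt
    ((hasDerivWithinAt_const t s 0).congr_of_mem (fun x hx => hx) ht)

theorem LipschitzWith.integral_Ioc_eq_sub_of_hasDerivAt {f f' : ℝ → ℝ} {C : NNReal}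
    (hf : LipschitzWith C f) {a b : ℝ} (hab : a ≤ b)
    (hf' : ∀ᵐ t ∂volume.restrict (Ioc a b), HasDerivAt f (f' t) t) :
    ∫ t in Ioc a b, f' t = f b - f a := by
  rw [integral_congr_ae (hf'.mono fun t ht => ht.deriv.symm),
    ← intervalIntegral.integral_of_le hab]
  exact (hf.lipschitzOnWith (s := uIcc a b)).absolutelyContinuousOnInterval.integral_deriv_eq_sub

theorem ofReal_integral_le_lintegral_ofReal {α : Type*} [MeasurableSpace α] {μ : Measure α}
    (f : α → ℝ) : ENNReal.ofReal (∫ x, f x ∂μ) ≤ ∫⁻ x, ENNReal.ofReal (f x) ∂μ := by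
  by_cases hf : Integrable f μ
  · refine ENNReal.ofReal_le_of_le_toReal ?_
    rw [integral_eq_lintegral_pos_part_sub_lintegral_neg_part hf]
    exact sub_le_self _ ENNReal.toReal_nonneg
  · simp [integral_undef hf]

theorem LipschitzWith.integral_Ioc_dotProduct_eq_sub {ι : Type*} [Fintype ι] {q q' : ℝ → ι → ℝ}
    {C : NNReal} (hq : LipschitzWith C q) {a b : ℝ} (hab : a ≤ b)
    (hq' : ∀ᵐ t ∂volume.restrict (Ioc a b), HasDerivAt q (q' t) t) (θ : ι → ℝ) :
    ∫ t in Ioc a b, θ ⬝ᵥ q' t = θ ⬝ᵥ q b - θ ⬝ᵥ q a := by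
  set L : (ι → ℝ) →L[ℝ] ℝ := ∑ k, θ k • ContinuousLinearMap.proj k
  have hL : ∀ v, L v = θ ⬝ᵥ v := fun v => by simp [L, dotProduct]
  simpa only [Function.comp_apply, hL] using
    (L.lipschitz.comp hq).integral_Ioc_eq_sub_of_hasDerivAt hab
      (hq'.mono fun t ht => L.hasFDerivAt.comp_hasDerivAt t ht)

open scoped Classical in
theorem stmt_14_general {K : ℕ} (P : Matrix (Fin (K + 1)) (Fin (K + 1)) ℝ)
    (hP : ∀ k l, 0 ≤ P k l) (hProw : ∀ k, ∑ l, P k l ≤ 1)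
    (lam mu : Fin (K + 1) → ℝ) (hlam : ∀ k, 0 < lam k) (hmu : ∀ k, 0 < mu k)
    (ν : Fin (K + 1) → ℝ)
    (hν : ν = ((1 : Matrix (Fin (K + 1)) (Fin (K + 1)) ℝ) - Pᵀ)⁻¹ *ᵥ lam)
    (hνpos : ∀ k, 0 < ν k)
    (θstar : Fin (K + 1) → ℝ) (hθ : ∀ k, θstar k = Real.log (mu k / ν k))
    (T : ℝ) (hT : 0 < T) (r : Fin (K + 1) → ℝ)
    (q : ℝ → Fin (K + 1) → ℝ) (C : NNReal) (hLip : LipschitzWith C q)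
    (hq0 : q 0 = 0) (hqT : q T = r)
    (hqnonneg : ∀ t ∈ Set.Icc (0 : ℝ) T, ∀ k, 0 ≤ q t k)
    (q' : ℝ → Fin (K + 1) → ℝ)
    (hq' : ∀ᵐ t ∂(volume.restrict (Set.Ioc (0 : ℝ) T)), HasDerivAt q (q' t) t) :
    ENNReal.ofReal (∑ k, θstar k * r k)
      ≤ ∫⁻ t in Set.Ioc (0 : ℝ) T,
          ∑ J : Finset (Fin (K + 1)),
            (if (∀ i ∈ J, q t i = 0) ∧ (∀ i ∉ J, 0 < q t i) then
              ⨆ θ : Fin (K + 1) → ℝ,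
                ENNReal.ofReal
                  (∑ k, θ k * q' t k
                    - (∑ k, (Real.exp (θ k) - 1) * lam k
                      + ∑ k ∈ J,
                          max (Real.exp (-θ k) * ((∑ l, (Real.exp (θ l) - 1) * P k l) + 1) - 1) 0
                            * mu k
                      + ∑ k ∈ Jᶜ,
                          (Real.exp (-θ k) * ((∑ l, (Real.exp (θ l) - 1) * P k l) + 1) - 1)
                            * mu k))
            else 0) := by
  have hbal := eq_add_vecMul_of_eq_inv_mulVec hν fun h0 => (hνpos 0).ne' (congrFun h0 0)
  choose θJ hθJ_zero hθJ_out using exists_hamiltonian_eq_zero hP hProw hlam hmu hνpos hbal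
  have hflat : ∀ᵐ t ∂volume.restrict (Ioc 0 T), ∀ k, q t k = 0 → q' t k = 0 := by
    refine ae_all_iff.2 fun k => ?_
    filter_upwards [ae_restrict_of_ae (ae_eq_zero_of_hasDerivAt_of_eq_zero fun s => q s k), hq']
      with t hzero ht hk
    exact hzero hk _ (hasDerivAt_pi.1 ht k)
  have hpointwise : ∀ᵐ t ∂volume.restrict (Ioc 0 T),
      ENNReal.ofReal (θstar ⬝ᵥ q' t) ≤ lagrangian P lam mu (q t) (q' t) := by
    filter_upwards [hflat, ae_restrict_mem measurableSet_Ioc] with t hflat_t ht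
    rw [lagrangian_eq_iSup fun k => hqnonneg t (Ioc_subset_Icc_self ht) k]
    refine le_iSup_of_le (θJ (Finset.univ.filter (q t · = 0))) (le_of_eq (congrArg _ ?_))
    rw [hθJ_zero, sub_zero]
    refine Finset.sum_congr rfl fun k _ => ?_
    by_cases hk : q t k = 0
    · simp [hflat_t k hk]
    · rw [hθJ_out _ k (by simpa using hk), hθ k]
  calc ENNReal.ofReal (θstar ⬝ᵥ r) = ENNReal.ofReal (∫ t in Ioc 0 T, θstar ⬝ᵥ q' t) := by
        rw [hLip.integral_Ioc_dotProduct_eq_sub hT.le hq', hq0, hqT, dotProduct_zero, sub_zero]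
    _ ≤ ∫⁻ t in Ioc 0 T, ENNReal.ofReal (θstar ⬝ᵥ q' t) := ofReal_integral_le_lintegral_ofReal _
    _ ≤ ∫⁻ t in Ioc 0 T, lagrangian P lam mu (q t) (q' t) := lintegral_mono_ae hpointwise
    -- equal up to the `Decidable` instances of the `if`, elaborated over `Fin` in the statement
    _ = _ := by simp only [lagrangian, hamiltonian, hFun, dotProduct]; congr!

open scoped Classical in
/-- The lower bound (41): for `θ*_k = ln(μ_k/ν_k)`, every `T > 0`, every `r ∈ ℝ₊^K` and
every Lipschitz path `q : [0,T] → ℝ₊^K` with `q(0) = 0`, `q(T) = r` and a.e. derivative `q'`,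
one has `∫_0^T L(q(t), q'(t)) dt ≥ θ*·r`, the integral being taken in `[0,+∞]`.
Here `L(x,y) = Σ_J 1_{F_J}(x) L_J(y)` with
`F_J = {x ≥ 0 : x_i = 0 ⇔ i ∈ J}` and `L_J(y) = sup_θ (θ·y − H_J(θ)) ∈ [0,+∞]`,
`H_J(θ) = Σ_k (e^{θ_k}−1)λ_k + Σ_{k∈J} h_k(θ)⁺ μ_k + Σ_{k∉J} h_k(θ) μ_k`. -/
theorem stmt_14 {K : ℕ} (P : Matrix (Fin (K + 1)) (Fin (K + 1)) ℝ)
    (hP : ∀ k l, 0 ≤ P k l) (hProw : ∀ k, ∑ l, P k l ≤ 1)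
    (hspec : ∀ z ∈ spectrum ℂ (P.map Complex.ofReal), ‖z‖ < 1)
    (lam mu : Fin (K + 1) → ℝ) (hlam : ∀ k, 0 < lam k) (hmu : ∀ k, 0 < mu k)
    (ν : Fin (K + 1) → ℝ)
    (hν : ν = ((1 : Matrix (Fin (K + 1)) (Fin (K + 1)) ℝ) - Pᵀ)⁻¹ *ᵥ lam)
    (hνpos : ∀ k, 0 < ν k)
    (θstar : Fin (K + 1) → ℝ) (hθ : ∀ k, θstar k = Real.log (mu k / ν k))
    (T : ℝ) (hT : 0 < T) (r : Fin (K + 1) → ℝ) (hr : ∀ k, 0 ≤ r k)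
    (q : ℝ → Fin (K + 1) → ℝ) (C : NNReal) (hLip : LipschitzWith C q)
    (hq0 : q 0 = 0) (hqT : q T = r)
    (hqnonneg : ∀ t ∈ Set.Icc (0 : ℝ) T, ∀ k, 0 ≤ q t k)
    (q' : ℝ → Fin (K + 1) → ℝ)
    (hq' : ∀ᵐ t ∂(volume.restrict (Set.Ioc (0 : ℝ) T)), HasDerivAt q (q' t) t) :
    ENNReal.ofReal (∑ k, θstar k * r k)
      ≤ ∫⁻ t in Set.Ioc (0 : ℝ) T,
          ∑ J : Finset (Fin (K + 1)),
            (if (∀ i ∈ J, q t i = 0) ∧ (∀ i ∉ J, 0 < q t i) then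
              ⨆ θ : Fin (K + 1) → ℝ,
                ENNReal.ofReal
                  (∑ k, θ k * q' t k
                    - (∑ k, (Real.exp (θ k) - 1) * lam k
                      + ∑ k ∈ J,
                          max (Real.exp (-θ k) * ((∑ l, (Real.exp (θ l) - 1) * P k l) + 1) - 1) 0
                            * mu k
                      + ∑ k ∈ Jᶜ,
                          (Real.exp (-θ k) * ((∑ l, (Real.exp (θ l) - 1) * P k l) + 1) - 1)
                            * mu k))
            else 0) :=
  stmt_14_general P hP hProw lam mu hlam hmu ν hν hνpos θstar hθ T hT r q C hLip hq0 hqT hqnonneg q'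
    hq'
end

section
/- Fix w_1,…,w_K ≥ 0 with Σ_{l=1}^K w_l ≤ 1 and set w_0 = 1 − Σ_{l=1}^K w_l. Then for every θ ∈ ℝ^K, the infimum over σ ∈ ℝ^K and τ ∈ ℝ of Σ_{l=1}^K (e^{σ_l} − 1) w_l + (e^{τ} − 1) w_0 + max( max_{1≤l≤K} (θ_l − σ_l), −τ ) equals ln( Σ_{l=1}^K e^{θ_l} w_l + w_0 ). -/
/-- The minimization of `V_k` in the proof of equation (35): for nonnegative weights
`w_1,…,w_K` with `Σ_l w_l ≤ 1` and `w_0 = 1 − Σ_l w_l`, and any `θ ∈ ℝ^K`,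
`inf_{σ,τ} ( Σ_l (e^{σ_l} − 1) w_l + (e^τ − 1) w_0 + max(max_l (θ_l − σ_l), −τ) )
  = ln( Σ_l e^{θ_l} w_l + w_0 )`. -/
theorem stmt_17 {K : ℕ} (w : Fin (K + 1) → ℝ)
    (hw : ∀ l, 0 ≤ w l) (hw1 : ∑ l, w l ≤ 1)
    (θ : Fin (K + 1) → ℝ) :
    (⨅ (σ : Fin (K + 1) → ℝ) (τ : ℝ),
        (∑ l, (Real.exp (σ l) - 1) * w l + (Real.exp τ - 1) * (1 - ∑ l, w l)
          + max (Finset.univ.sup' Finset.univ_nonempty (fun l => θ l - σ l)) (-τ)))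
      = Real.log ((∑ l, Real.exp (θ l) * w l) + (1 - ∑ l, w l)) := by
  set S : ℝ := (∑ l, Real.exp (θ l) * w l) + (1 - ∑ l, w l) with hSdef
  -- S is positive
  set m : ℝ := min (Finset.univ.inf' Finset.univ_nonempty fun l => Real.exp (θ l)) 1 with hmdef
  have hm : 0 < m := by
    refine lt_min ?_ one_pos
    rw [Finset.lt_inf'_iff]
    exact fun l _ => Real.exp_pos _
  have hS : 0 < S := by
    have h1 : ∑ l, m * w l ≤ ∑ l, Real.exp (θ l) * w l := by
      refine Finset.sum_le_sum fun l _ => mul_le_mul_of_nonneg_right ?_ (hw l)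
      exact le_trans (min_le_left _ _) (Finset.inf'_le _ (Finset.mem_univ l))
    have h2 : m * (1 - ∑ l, w l) ≤ 1 * (1 - ∑ l, w l) :=
      mul_le_mul_of_nonneg_right (min_le_right _ _) (by linarith)
    have h3 : ∑ l, m * w l = m * ∑ l, w l := by rw [Finset.mul_sum]
    nlinarith [h1, h2, h3]
  have hSne : S ≠ 0 := ne_of_gt hS
  -- the key lower bound
  have key : ∀ (σ : Fin (K + 1) → ℝ) (τ : ℝ), Real.log S ≤
      (∑ l, (Real.exp (σ l) - 1) * w l) + (Real.exp τ - 1) * (1 - ∑ l, w l)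
        + max (Finset.univ.sup' Finset.univ_nonempty (fun l => θ l - σ l)) (-τ) := by
    intro σ τ
    set M : ℝ := max (Finset.univ.sup' Finset.univ_nonempty (fun l => θ l - σ l)) (-τ) with hM
    have hMl : ∀ l, θ l - M ≤ σ l := by
      intro l
      have h := Finset.le_sup' (fun l => θ l - σ l) (Finset.mem_univ l)
      have h2 : θ l - σ l ≤ M := le_trans h (le_max_left _ _)
      linarith
    have hτ : -M ≤ τ := by
      have := le_max_right (Finset.univ.sup' Finset.univ_nonempty (fun l => θ l - σ l)) (-τ)
      linarith
    have e1 : ∑ l, (Real.exp (θ l) * Real.exp (-M) - 1) * w l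
        ≤ ∑ l, (Real.exp (σ l) - 1) * w l := by
      refine Finset.sum_le_sum fun l _ => mul_le_mul_of_nonneg_right ?_ (hw l)
      have h := Real.exp_le_exp.mpr (hMl l)
      rw [Real.exp_sub, div_eq_mul_inv, ← Real.exp_neg] at h
      linarith [h]
    have e2 : (Real.exp (-M) - 1) * (1 - ∑ l, w l) ≤ (Real.exp τ - 1) * (1 - ∑ l, w l) :=
      mul_le_mul_of_nonneg_right (by linarith [Real.exp_le_exp.mpr hτ]) (by linarith)
    have e3 : ∑ l, (Real.exp (θ l) * Real.exp (-M) - 1) * w l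
        = Real.exp (-M) * (∑ l, Real.exp (θ l) * w l) - ∑ l, w l := by
      rw [Finset.mul_sum, ← Finset.sum_sub_distrib]
      exact Finset.sum_congr rfl fun l _ => by ring
    have hexp : Real.exp (-M) * S = Real.exp (Real.log S - M) := by
      rw [Real.exp_sub, Real.exp_log hS, Real.exp_neg, div_eq_mul_inv]; ring
    have hle : Real.log S - M + 1 ≤ Real.exp (-M) * S := by
      rw [hexp]; exact Real.add_one_le_exp _
    have hSexp : Real.exp (-M) * S = Real.exp (-M) * (∑ l, Real.exp (θ l) * w l)
        + Real.exp (-M) * (1 - ∑ l, w l) := by rw [hSdef, Real.exp_neg]; ring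
    nlinarith [e1, e2, e3, hle, hSexp]
  refine le_antisymm ?_ ?_
  · -- upper bound: evaluate at σ₀, τ₀
    set σ₀ : Fin (K + 1) → ℝ := fun l => θ l - Real.log S with hσ₀
    set τ₀ : ℝ := -Real.log S with hτ₀
    have hval : (∑ l, (Real.exp (σ₀ l) - 1) * w l) + (Real.exp τ₀ - 1) * (1 - ∑ l, w l)
        + max (Finset.univ.sup' Finset.univ_nonempty (fun l => θ l - σ₀ l)) (-τ₀)
        = Real.log S := by
      have hsup : (Finset.univ.sup' Finset.univ_nonempty (fun l => θ l - σ₀ l))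
          = Real.log S := by
        have : (fun l : Fin (K + 1) => θ l - σ₀ l) = fun _ => Real.log S := by
          funext l; simp [hσ₀]
        rw [this, Finset.sup'_const]
      rw [hsup, hτ₀, neg_neg, max_self]
      have h1 : ∑ l, (Real.exp (σ₀ l) - 1) * w l
          = S⁻¹ * (∑ l, Real.exp (θ l) * w l) - ∑ l, w l := by
        rw [Finset.mul_sum, ← Finset.sum_sub_distrib]
        refine Finset.sum_congr rfl fun l _ => ?_
        rw [hσ₀]
        simp only []
        rw [Real.exp_sub, Real.exp_log hS]
        ring
      have h2 : Real.exp (-Real.log S) = S⁻¹ := by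
        rw [Real.exp_neg, Real.exp_log hS]
      rw [h1, h2]
      have h3 : S⁻¹ * S = 1 := inv_mul_cancel₀ hSne
      rw [hSdef] at h3
      nlinarith [h3]
    have hbdd : ∀ σ : Fin (K + 1) → ℝ, BddBelow (Set.range fun τ : ℝ =>
        (∑ l, (Real.exp (σ l) - 1) * w l) + (Real.exp τ - 1) * (1 - ∑ l, w l)
          + max (Finset.univ.sup' Finset.univ_nonempty (fun l => θ l - σ l)) (-τ)) := by
      intro σ
      exact ⟨Real.log S, by rintro x ⟨τ, rfl⟩; exact key σ τ⟩
    calc (⨅ (σ : Fin (K + 1) → ℝ) (τ : ℝ),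
        (∑ l, (Real.exp (σ l) - 1) * w l + (Real.exp τ - 1) * (1 - ∑ l, w l)
          + max (Finset.univ.sup' Finset.univ_nonempty (fun l => θ l - σ l)) (-τ)))
        ≤ (⨅ (τ : ℝ), (∑ l, (Real.exp (σ₀ l) - 1) * w l + (Real.exp τ - 1) * (1 - ∑ l, w l)
          + max (Finset.univ.sup' Finset.univ_nonempty (fun l => θ l - σ₀ l)) (-τ))) := by
          refine ciInf_le ⟨Real.log S, ?_⟩ σ₀
          rintro x ⟨σ, rfl⟩
          exact le_ciInf fun τ => key σ τ
      _ ≤ (∑ l, (Real.exp (σ₀ l) - 1) * w l) + (Real.exp τ₀ - 1) * (1 - ∑ l, w l)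
          + max (Finset.univ.sup' Finset.univ_nonempty (fun l => θ l - σ₀ l)) (-τ₀) :=
          ciInf_le (hbdd σ₀) τ₀
      _ = Real.log S := hval
  · exact le_ciInf fun σ => le_ciInf fun τ => key σ τ
end

section
/- Let K = 2 and suppose p_{12} > 0, p_{21} > 0 (so p_{11} < 1 and p_{22} < 1), and (1 − p_{11})/p_{12} > p_{21}/(1 − p_{22}). If θ = (θ_1, θ_2) with θ_1 > 0 and θ_2 > 0 satisfies h_1(θ) = 0, then h_2(θ) < 0 (in the open first quadrant the curve h_1 = 0 lies strictly above the curve h_2 = 0). -/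
/-- For a two-node network with `p_{12} > 0`, `p_{21} > 0` and
`(1 − p_{11})/p_{12} > p_{21}/(1 − p_{22})`: if `θ_1 > 0`, `θ_2 > 0` and `h_1(θ) = 0`,
then `h_2(θ) < 0` (in the open first quadrant the curve `h_1 = 0` lies strictly above
the curve `h_2 = 0`). -/
theorem stmt_19 (P : Matrix (Fin 2) (Fin 2) ℝ)
    (hP : ∀ k l, 0 ≤ P k l) (hProw : ∀ k, P k 0 + P k 1 ≤ 1)
    (hp12 : 0 < P 0 1) (hp21 : 0 < P 1 0)
    (hslope : (1 - P 0 0) / P 0 1 > P 1 0 / (1 - P 1 1))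
    (θ1 θ2 : ℝ) (hθ1 : 0 < θ1) (hθ2 : 0 < θ2)
    (hz : Real.exp (-θ1) * ((Real.exp θ1 - 1) * P 0 0 + (Real.exp θ2 - 1) * P 0 1 + 1) - 1 = 0) :
    Real.exp (-θ2) * ((Real.exp θ1 - 1) * P 1 0 + (Real.exp θ2 - 1) * P 1 1 + 1) - 1 < 0 := by
  set x := Real.exp θ1 with hxdef
  set y := Real.exp θ2 with hydef
  have hx : (1:ℝ) < x := by rw [hxdef]; exact Real.one_lt_exp_iff.mpr hθ1
  have hy : (1:ℝ) < y := by rw [hydef]; exact Real.one_lt_exp_iff.mpr hθ2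
  have hxpos : (0:ℝ) < x := by linarith
  have hypos : (0:ℝ) < y := by linarith
  -- from hz: A = x
  have hA : (x - 1) * P 0 0 + (y - 1) * P 0 1 + 1 = x := by
    rw [Real.exp_neg, ← hxdef] at hz
    field_simp at hz
    linarith
  -- key inequalities
  have hp22 : 0 < 1 - P 1 1 := by have := hProw 1; have := hP 1 1; simp at this ⊢; linarith
  have hmul : P 1 0 * P 0 1 < (1 - P 0 0) * (1 - P 1 1) := by
    rw [gt_iff_lt, div_lt_div_iff₀ hp22 hp12] at hslope
    linarith
  have hkey : (y - 1) * P 0 1 = (x - 1) * (1 - P 0 0) := by linarith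
  have hB : (x - 1) * P 1 0 + (y - 1) * P 1 1 + 1 < y := by
    have h1 : (x - 1) * (P 1 0 * P 0 1) < (x - 1) * ((1 - P 0 0) * (1 - P 1 1)) := by
      apply mul_lt_mul_of_pos_left hmul; linarith
    have h2 : (x - 1) * P 1 0 * P 0 1 < (y - 1) * (1 - P 1 1) * P 0 1 := by nlinarith
    have h3 : (x - 1) * P 1 0 < (y - 1) * (1 - P 1 1) :=
      lt_of_mul_lt_mul_right (by linarith) hp12.le
    nlinarith
  have : Real.exp (-θ2) * ((x - 1) * P 1 0 + (y - 1) * P 1 1 + 1) < Real.exp (-θ2) * y := by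
    apply mul_lt_mul_of_pos_left hB (Real.exp_pos _)
  rw [Real.exp_neg, ← hydef] at this ⊢
  have : y⁻¹ * y = 1 := inv_mul_cancel₀ hypos.ne'
  nlinarith [Real.exp_pos (-θ2)]
end
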